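/- arXiv:2206.14457 — 10 statements merged into one kernel-verified Lean document; each statement's English description precedes it below -/
import Mathlib

section
/- Let X be a real Banach space. If every pair (A,B) of nonempty closed bounded convex subsets of X is semisharp proximal, then X is strictly convex. -/
open Filter Topology

variable {X : Type*} [NormedAddCommGroup X] [NormedSpace ℝ X]

/-- The distance between two sets: `d(A,B) = inf {‖x−y‖ : x ∈ A, y ∈ B}`. -/
noncomputable def setD (A B : Set X) : ℝ :=
  sInf {r : ℝ | ∃ x ∈ A, ∃ y ∈ B, r = ‖x - y‖}

/-- The diameter-type quantity `δ(A,B) = sup {‖x−y‖ : x ∈ A, y ∈ B}`. -/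
noncomputable def setDelta (A B : Set X) : ℝ :=
  sSup {r : ℝ | ∃ x ∈ A, ∃ y ∈ B, r = ‖x - y‖}

/-- `d(z,B) = inf {‖z−y‖ : y ∈ B}`. -/
noncomputable def ptD (z : X) (B : Set X) : ℝ :=
  sInf {r : ℝ | ∃ y ∈ B, r = ‖z - y‖}

/-- `δ(z,B) = sup {‖z−y‖ : y ∈ B}`. -/
noncomputable def ptDelta (z : X) (B : Set X) : ℝ :=
  sSup {r : ℝ | ∃ y ∈ B, r = ‖z - y‖}

/-- A pair `(A,B)` is semisharp proximal. -/
def SemisharpProximal (A B : Set X) : Prop :=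
  (∀ x ∈ A, ∀ y ∈ B, ∀ z ∈ B, ‖x - y‖ = setD A B → ‖x - z‖ = setD A B → y = z) ∧
  (∀ y ∈ B, ∀ x ∈ A, ∀ z ∈ A, ‖x - y‖ = setD A B → ‖z - y‖ = setD A B → x = z)

/-- The pair `(A,B)` has property UC. -/
def PropertyUC (A B : Set X) : Prop :=
  ∀ x y z : ℕ → X, (∀ n, x n ∈ A) → (∀ n, y n ∈ A) → (∀ n, z n ∈ B) →
    Tendsto (fun n => ‖x n - z n‖) atTop (𝓝 (setD A B)) →
    Tendsto (fun n => ‖y n - z n‖) atTop (𝓝 (setD A B)) →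
    Tendsto (fun n => ‖x n - y n‖) atTop (𝓝 (0 : ℝ))

/-- Weak convergence of a sequence. -/
def WeakConv (u : ℕ → X) (x : X) : Prop :=
  ∀ f : X →L[ℝ] ℝ, Tendsto (fun n => f (u n)) atTop (𝓝 (f x))

/-- The Kadec-Klee property of a normed space. -/
def KadecKleeProp (X : Type*) [NormedAddCommGroup X] [NormedSpace ℝ X] : Prop :=
  ∀ (u : ℕ → X) (x : X), WeakConv u x →
    Tendsto (fun n => ‖u n‖) atTop (𝓝 ‖x‖) → Tendsto u atTop (𝓝 x)

/-- `A` is weak approximatively compact with respect to `B`. -/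
def WeakApproxCompactWrt (A B : Set X) : Prop :=
  ∀ u : ℕ → X, (∀ n, u n ∈ A) →
    Tendsto (fun n => ptD (u n) B) atTop (𝓝 (setD A B)) →
    ∃ a ∈ A, ∃ φ : ℕ → ℕ, StrictMono φ ∧ WeakConv (u ∘ φ) a

/-- `A₀`, the set of points of `A` that realize the distance `d(A,B)`. -/
def proxA (A B : Set X) : Set X := {x ∈ A | ∃ y ∈ B, ‖x - y‖ = setD A B}

/-- `B₀`, the set of points of `B` that realize the distance `d(A,B)`. -/
def proxB (A B : Set X) : Set X := {y ∈ B | ∃ x ∈ A, ‖x - y‖ = setD A B}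

/-- The pair `(A,B)` is proximal: `A = A₀` and `B = B₀`. -/
def ProximalPair (A B : Set X) : Prop := A = proxA A B ∧ B = proxB A B

/-- `r(H₁,H₂) = inf {δ(x,H₂) : x ∈ H₁}`. -/
noncomputable def rr (H1 H2 : Set X) : ℝ := sInf {t : ℝ | ∃ x ∈ H1, t = ptDelta x H2}

/-- `R(H₁,H₂) = max {r(H₁,H₂), r(H₂,H₁)}`. -/
noncomputable def RR (H1 H2 : Set X) : ℝ := max (rr H1 H2) (rr H2 H1)

/-- `(H₁,H₂) ∈ Υ(A,B)`: nonempty closed bounded convex proximal sub-pairs of `(A,B)` at the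
same distance, with at least one of the two sets containing more than one point. -/
def Upsilon (A B H1 H2 : Set X) : Prop :=
  H1 ⊆ A ∧ H2 ⊆ B ∧ H1.Nonempty ∧ H2.Nonempty ∧ IsClosed H1 ∧ IsClosed H2 ∧
    Bornology.IsBounded H1 ∧ Bornology.IsBounded H2 ∧ Convex ℝ H1 ∧ Convex ℝ H2 ∧
    ProximalPair H1 H2 ∧ (¬ H1.Subsingleton ∨ ¬ H2.Subsingleton) ∧
    setD H1 H2 = setD A B

/-- `N(A,B) = sup {R(H₁,H₂)/δ(H₁,H₂) : (H₁,H₂) ∈ Υ(A,B)}`. -/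
noncomputable def NN (A B : Set X) : ℝ :=
  sSup {t : ℝ | ∃ H1 H2 : Set X, Upsilon A B H1 H2 ∧ t = RR H1 H2 / setDelta H1 H2}

/-- `(C₁,C₂) ∈ Ῡ(A,B)`: as `Υ(A,B)` but without requiring proximality. -/
def UpsilonBar (A B C1 C2 : Set X) : Prop :=
  C1 ⊆ A ∧ C2 ⊆ B ∧ C1.Nonempty ∧ C2.Nonempty ∧ IsClosed C1 ∧ IsClosed C2 ∧
    Bornology.IsBounded C1 ∧ Bornology.IsBounded C2 ∧ Convex ℝ C1 ∧ Convex ℝ C2 ∧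
    (¬ C1.Subsingleton ∨ ¬ C2.Subsingleton) ∧ setD C1 C2 = setD A B

/-- `c₀ = sup {R(C₁,C₂)/δ(C₁,C₂) : (C₁,C₂) ∈ Ῡ(A,B)}`. -/
noncomputable def cZero (A B : Set X) : ℝ :=
  sSup {t : ℝ | ∃ C1 C2 : Set X, UpsilonBar A B C1 C2 ∧ t = RR C1 C2 / setDelta C1 C2}

/-- `T` is a cyclic relatively nonexpansive mapping on `A ∪ B`. -/
def CyclicRelNonexpansive (A B : Set X) (T : X → X) : Prop :=
  Set.MapsTo T A B ∧ Set.MapsTo T B A ∧ ∀ x ∈ A, ∀ y ∈ B, ‖T x - T y‖ ≤ ‖x - y‖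

/- If `X` is not strictly convex, its unit sphere contains a segment `[x, y]` with `x ≠ y`. Every
point of it is at distance exactly `1` from the origin, so `d({0}, [x, y]) = 1` is attained at both
`x` and `y`, and semisharp proximality of `({0}, [x, y])` forces `x = y`. -/

theorem setD_eq_of_forall_norm_sub_eq {E : Type*} [NormedAddCommGroup E] {A B : Set E} {r : ℝ}
    (hA : A.Nonempty) (hB : B.Nonempty) (h : ∀ x ∈ A, ∀ y ∈ B, ‖x - y‖ = r) : setD A B = r := by
  obtain ⟨x, hx⟩ := hA
  obtain ⟨y, hy⟩ := hB
  have hset : {s : ℝ | ∃ x ∈ A, ∃ y ∈ B, s = ‖x - y‖} = {r} := by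
    ext s
    constructor
    · rintro ⟨x', hx', y', hy', rfl⟩
      exact h x' hx' y' hy'
    · rintro rfl
      exact ⟨x, hx, y, hy, (h x hx y hy).symm⟩
  rw [setD, hset, csInf_singleton]

theorem SemisharpProximal.subsingleton_of_subset_sphere {E : Type*} [NormedAddCommGroup E]
    {B : Set E} {z : E} {r : ℝ} (hB : SemisharpProximal {z} B)
    (hsphere : B ⊆ Metric.sphere z r) : B.Subsingleton := by
  intro y hy y' hy'
  have hdist : ∀ w ∈ B, ‖z - w‖ = r := fun w hw => by
    rw [← dist_eq_norm, dist_comm]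
    exact hsphere hw
  have hd : setD {z} B = r :=
    setD_eq_of_forall_norm_sub_eq (Set.singleton_nonempty z) ⟨y, hy⟩
      fun x hx w hw => hx ▸ hdist w hw
  exact hB.1 z rfl y hy y' hy' (by rw [hd, hdist y hy]) (by rw [hd, hdist y' hy'])

theorem segment_subset_sphere_of_forall_norm_combo_eq_one {x y : X}
    (h : ∀ a b : ℝ, 0 ≤ a → 0 ≤ b → a + b = 1 → ‖a • x + b • y‖ = 1) :
    segment ℝ x y ⊆ Metric.sphere 0 1 := by
  rintro _ ⟨a, b, ha, hb, hab, rfl⟩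
  simpa using h a b ha hb hab

theorem stmt0_general
    (h : ∀ A B : Set X, A.Nonempty → B.Nonempty → IsClosed A → IsClosed B →
      Bornology.IsBounded A → Bornology.IsBounded B → Convex ℝ A → Convex ℝ B →
      SemisharpProximal A B) :
    StrictConvexSpace ℝ X := by
  refine StrictConvexSpace.of_norm_combo_ne_one fun x y _ _ hne => ?_
  by_contra! hcombo
  have hcompact : IsCompact (segment ℝ x y) := by
    simpa only [convexHull_pair] using (Set.toFinite {x, y}).isCompact_convexHull ℝ
  have hsemisharp : SemisharpProximal {0} (segment ℝ x y) :=
    h _ _ (Set.singleton_nonempty 0) ⟨x, left_mem_segment ℝ x y⟩ isClosed_singleton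
      hcompact.isClosed Bornology.isBounded_singleton hcompact.isBounded (convex_singleton 0)
      (convex_segment x y)
  exact hne <| hsemisharp.subsingleton_of_subset_sphere
    (segment_subset_sphere_of_forall_norm_combo_eq_one hcombo)
    (left_mem_segment ℝ x y) (right_mem_segment ℝ x y)

theorem stmt0 [CompleteSpace X]
    (h : ∀ A B : Set X, A.Nonempty → B.Nonempty → IsClosed A → IsClosed B →
      Bornology.IsBounded A → Bornology.IsBounded B → Convex ℝ A → Convex ℝ B →
      SemisharpProximal A B) :
    StrictConvexSpace ℝ X :=
  stmt0_general h
end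

section
/- Let X be a real Banach space. Suppose that for every pair (A,B) of nonempty closed bounded convex subsets of X, every x∈A and y∈B with ‖x−y‖=d(A,B), and every sequence {x_n} in A with ‖x_n−y‖→d(A,B), the sequence x_n converges in norm to x. Then X is strictly convex. -/
open Filter Topology

variable {X : Type*} [NormedAddCommGroup X] [NormedSpace ℝ X]

lemma seg_norm_one {x y : X} (hx : ‖x‖ = 1) (hy : ‖y‖ = 1) (hxy : ‖x + y‖ = 2)
    {p : X} (hp : p ∈ segment ℝ x y) : ‖p‖ = 1 := by
  obtain ⟨a, b, ha, hb, hab, rfl⟩ := hp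
  have hle : ‖a • x + b • y‖ ≤ 1 := by
    calc ‖a • x + b • y‖ ≤ ‖a • x‖ + ‖b • y‖ := norm_add_le _ _
    _ = a + b := by rw [norm_smul, norm_smul, Real.norm_of_nonneg ha,
        Real.norm_of_nonneg hb, hx, hy, mul_one, mul_one]
    _ = 1 := hab
  refine le_antisymm hle ?_
  rcases le_total a b with hba | hba
  · have hb2 : (1:ℝ)/2 ≤ b := by linarith
    have hbpos : (0:ℝ) < b := by linarith
    set s : ℝ := 1 / (2 * b) with hs
    have hspos : 0 < s := by positivity
    have hs1 : s ≤ 1 := by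
      rw [hs, div_le_one (by linarith)]; linarith
    have hb' : b ≠ 0 := ne_of_gt hbpos
    have key : (1/2 : ℝ) • (x + y) = s • (a • x + b • y) + (1 - s) • x := by
      rw [hs]
      match_scalars
      · field_simp; linarith
      · field_simp
    have hnorm : ‖(1/2 : ℝ) • (x + y)‖ = 1 := by
      rw [norm_smul, Real.norm_of_nonneg (by norm_num), hxy]; norm_num
    have : 1 ≤ s * ‖a • x + b • y‖ + (1 - s) := by
      calc (1:ℝ) = ‖s • (a • x + b • y) + (1 - s) • x‖ := by rw [← key, hnorm]
      _ ≤ s * ‖a • x + b • y‖ + (1 - s) * ‖x‖ := by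
          refine (norm_add_le _ _).trans ?_
          rw [norm_smul, norm_smul, Real.norm_of_nonneg hspos.le,
            Real.norm_of_nonneg (by linarith)]
      _ = s * ‖a • x + b • y‖ + (1 - s) := by rw [hx, mul_one]
    nlinarith
  · have ha2 : (1:ℝ)/2 ≤ a := by linarith
    have hapos : (0:ℝ) < a := by linarith
    set s : ℝ := 1 / (2 * a) with hs
    have hspos : 0 < s := by positivity
    have hs1 : s ≤ 1 := by
      rw [hs, div_le_one (by linarith)]; linarith
    have ha' : a ≠ 0 := ne_of_gt hapos
    have key : (1/2 : ℝ) • (x + y) = s • (a • x + b • y) + (1 - s) • y := by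
      rw [hs]
      match_scalars
      · field_simp
      · field_simp; linarith
    have hnorm : ‖(1/2 : ℝ) • (x + y)‖ = 1 := by
      rw [norm_smul, Real.norm_of_nonneg (by norm_num), hxy]; norm_num
    have : 1 ≤ s * ‖a • x + b • y‖ + (1 - s) := by
      calc (1:ℝ) = ‖s • (a • x + b • y) + (1 - s) • y‖ := by rw [← key, hnorm]
      _ ≤ s * ‖a • x + b • y‖ + (1 - s) * ‖y‖ := by
          refine (norm_add_le _ _).trans ?_
          rw [norm_smul, norm_smul, Real.norm_of_nonneg hspos.le,
            Real.norm_of_nonneg (by linarith)]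
      _ = s * ‖a • x + b • y‖ + (1 - s) := by rw [hy, mul_one]
    nlinarith

theorem stmt3 [CompleteSpace X]
    (h : ∀ A B : Set X, A.Nonempty → B.Nonempty → IsClosed A → IsClosed B →
      Bornology.IsBounded A → Bornology.IsBounded B → Convex ℝ A → Convex ℝ B →
      ∀ x ∈ A, ∀ y ∈ B, ‖x - y‖ = setD A B →
      ∀ u : ℕ → X, (∀ n, u n ∈ A) →
        Tendsto (fun n => ‖u n - y‖) atTop (𝓝 (setD A B)) →
        Tendsto u atTop (𝓝 x)) :
    StrictConvexSpace ℝ X := by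
  refine StrictConvexSpace.of_norm_add_ne_two fun x y hx hy hne h2 => ?_
  apply hne
  set A : Set X := segment ℝ x y with hA
  have hcomp : IsCompact A := by
    rw [hA, segment_eq_image]
    exact isCompact_Icc.image
      (((continuous_const.sub continuous_id).smul continuous_const).add
        (continuous_id.smul continuous_const))
  have hone : ∀ p ∈ A, ‖p‖ = 1 := fun p hp => seg_norm_one hx hy h2 hp
  have hset : {r : ℝ | ∃ p ∈ A, ∃ q ∈ ({0} : Set X), r = ‖p - q‖} = {1} := by
    ext r
    simp only [Set.mem_setOf_eq, Set.mem_singleton_iff]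
    constructor
    · rintro ⟨p, hp, q, hq, rfl⟩
      rw [Set.mem_singleton_iff.mp hq, sub_zero]
      exact hone p hp
    · rintro rfl
      exact ⟨x, left_mem_segment ℝ x y, 0, rfl, by rw [sub_zero, hx]⟩
  have hD : setD A ({0} : Set X) = 1 := by rw [setD, hset, csInf_singleton]
  have := h A {0} ⟨x, left_mem_segment ℝ x y⟩ ⟨0, rfl⟩ hcomp.isClosed isClosed_singleton
    hcomp.isBounded Bornology.isBounded_singleton (convex_segment x y)
    (convex_singleton 0) x (left_mem_segment ℝ x y) 0 rfl
    (by rw [sub_zero, hx, hD]) (fun _ => y) (fun _ => right_mem_segment ℝ x y)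
    (by rw [hD]; simpa [hy] using tendsto_const_nhds)
  exact tendsto_nhds_unique this tendsto_const_nhds
end

section
/- Let X be a strictly convex real Banach space, let A be a nonempty compact convex subset of X and let B be a nonempty compact subset of X. Then the pair (A,B) has property UC. -/
open Filter Topology

variable {X : Type*} [NormedAddCommGroup X] [NormedSpace ℝ X]

theorem stmt4 [CompleteSpace X] [StrictConvexSpace ℝ X]
    (A B : Set X) (hAne : A.Nonempty) (hBne : B.Nonempty)
    (hAcp : IsCompact A) (hBcp : IsCompact B) (hAcv : Convex ℝ A) :
    PropertyUC A B := by
  intro x y z hx hy hz hxz hyz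
  have hbdd : BddBelow {r : ℝ | ∃ a ∈ A, ∃ b ∈ B, r = ‖a - b‖} :=
    ⟨0, fun r ⟨a, _, b, _, hr⟩ => hr ▸ norm_nonneg _⟩
  have hdle : ∀ a ∈ A, ∀ b ∈ B, setD A B ≤ ‖a - b‖ := fun a ha b hb =>
    csInf_le hbdd ⟨a, ha, b, hb, rfl⟩
  apply Filter.tendsto_of_subseq_tendsto
  intro ns hns
  obtain ⟨a1, ha1, φ1, hφ1, hx1⟩ := hAcp.tendsto_subseq (fun n => hx (ns n))
  obtain ⟨a2, ha2, φ2, hφ2, hy2⟩ := hAcp.tendsto_subseq (fun n => hy (ns (φ1 n)))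
  obtain ⟨b, hb, φ3, hφ3, hz3⟩ := hBcp.tendsto_subseq (fun n => hz (ns (φ1 (φ2 n))))
  set m : ℕ → ℕ := fun n => φ1 (φ2 (φ3 n)) with hm
  have hmt : Tendsto (fun n => ns (m n)) atTop atTop :=
    hns.comp ((hφ1.comp (hφ2.comp hφ3)).tendsto_atTop)
  have hxm : Tendsto (fun n => x (ns (m n))) atTop (𝓝 a1) :=
    hx1.comp ((hφ2.comp hφ3).tendsto_atTop)
  have hym : Tendsto (fun n => y (ns (m n))) atTop (𝓝 a2) :=
    hy2.comp (hφ3.tendsto_atTop)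
  have hzm : Tendsto (fun n => z (ns (m n))) atTop (𝓝 b) := hz3
  have h1 : ‖a1 - b‖ = setD A B :=
    tendsto_nhds_unique ((hxm.sub hzm).norm) (hxz.comp hmt)
  have h2 : ‖a2 - b‖ = setD A B :=
    tendsto_nhds_unique ((hym.sub hzm).norm) (hyz.comp hmt)
  have heq : a1 = a2 := by
    by_contra hne
    have hmid : ((1:ℝ)/2) • a1 + ((1:ℝ)/2) • a2 ∈ A :=
      hAcv ha1 ha2 (by norm_num) (by norm_num) (by norm_num)
    have hlt : ‖((1:ℝ)/2) • (a1 - b) + ((1:ℝ)/2) • (a2 - b)‖ < setD A B :=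
      norm_combo_lt_of_ne h1.le h2.le (fun h => hne (by
        have := sub_left_injective.eq_iff.mp h; exact this)) (by norm_num) (by norm_num)
        (by norm_num)
    have hrw : ((1:ℝ)/2) • (a1 - b) + ((1:ℝ)/2) • (a2 - b)
        = (((1:ℝ)/2) • a1 + ((1:ℝ)/2) • a2) - b := by
      module
    rw [hrw] at hlt
    exact absurd (hdle _ hmid _ hb) (not_le.mpr hlt)
  refine ⟨m, ?_⟩
  have : Tendsto (fun n => ‖x (ns (m n)) - y (ns (m n))‖) atTop (𝓝 ‖a1 - a2‖) :=
    (hxm.sub hym).norm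
  rwa [heq, sub_self, norm_zero] at this
end

section
/- Let X be a real Banach space. Suppose that every pair (A,B), with A a nonempty compact convex subset of X and B a nonempty compact subset of X, has property UC. Then X is strictly convex. -/
open Filter Topology

variable {X : Type*} [NormedAddCommGroup X] [NormedSpace ℝ X]

theorem stmt5 [CompleteSpace X]
    (h : ∀ A B : Set X, A.Nonempty → B.Nonempty → IsCompact A → IsCompact B →
      Convex ℝ A → PropertyUC A B) :
    StrictConvexSpace ℝ X := by
  apply StrictConvexSpace.of_norm_add
  intro x y hx hy hxy
  suffices hxyeq : x = y by rw [hxyeq]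
  set A : Set X := segment ℝ x y with hA
  have hnorm : ∀ p ∈ A, ‖p‖ = 1 := by
    rintro p ⟨a, b, ha, hb, hab, rfl⟩
    have h1 : ‖a • x + b • y‖ ≤ 1 := by
      calc ‖a • x + b • y‖ ≤ ‖a • x‖ + ‖b • y‖ := norm_add_le _ _
        _ = a + b := by rw [norm_smul, norm_smul, hx, hy,
              Real.norm_of_nonneg ha, Real.norm_of_nonneg hb]; ring
        _ = 1 := hab
    have h2 : ‖b • x + a • y‖ ≤ 1 := by
      calc ‖b • x + a • y‖ ≤ ‖b • x‖ + ‖a • y‖ := norm_add_le _ _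
        _ = b + a := by rw [norm_smul, norm_smul, hx, hy,
              Real.norm_of_nonneg ha, Real.norm_of_nonneg hb]; ring
        _ = 1 := by linarith
    have hsum : (a • x + b • y) + (b • x + a • y) = x + y := by
      have : (a + b) • x + (a + b) • y = x + y := by rw [hab, one_smul, one_smul]
      rw [← this, add_smul, add_smul]; abel
    have : (2 : ℝ) ≤ ‖a • x + b • y‖ + ‖b • x + a • y‖ := by
      calc (2 : ℝ) = ‖x + y‖ := hxy.symm
        _ = ‖(a • x + b • y) + (b • x + a • y)‖ := by rw [hsum]
        _ ≤ _ := norm_add_le _ _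
    linarith
  have hd : setD A ({0} : Set X) = 1 := by
    have hset : {r : ℝ | ∃ p ∈ A, ∃ z ∈ ({0} : Set X), r = ‖p - z‖} = {1} := by
      ext r
      simp only [Set.mem_setOf_eq, Set.mem_singleton_iff]
      constructor
      · rintro ⟨p, hp, z, hz, rfl⟩
        rw [hz, sub_zero]; exact hnorm p hp
      · rintro rfl
        exact ⟨x, left_mem_segment ℝ x y, 0, rfl, by simp [hx]⟩
    rw [setD, hset, csInf_singleton]
  have hcpt : IsCompact A := by
    rw [hA, segment_eq_image]
    exact isCompact_Icc.image (by fun_prop)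
  have huc := h A {0} ⟨x, left_mem_segment ℝ x y⟩ ⟨0, rfl⟩ hcpt
    isCompact_singleton (convex_segment x y)
  have hconc := huc (fun _ => x) (fun _ => y) (fun _ => 0)
    (fun _ => left_mem_segment ℝ x y) (fun _ => right_mem_segment ℝ x y)
    (fun _ => rfl)
    (by simpa [hd, sub_zero, hx] using (tendsto_const_nhds : Tendsto (fun _ : ℕ => (1:ℝ)) atTop (𝓝 1)))
    (by simpa [hd, sub_zero, hy] using (tendsto_const_nhds : Tendsto (fun _ : ℕ => (1:ℝ)) atTop (𝓝 1)))
  have h0 : ‖x - y‖ = 0 := tendsto_nhds_unique tendsto_const_nhds hconc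
  exact sub_eq_zero.mp (norm_eq_zero.mp h0)
end

section
/- Let X be a strictly convex real Banach space having the Kadec-Klee property, and let (A,B) be a pair of nonempty closed bounded convex subsets of X that is weak approximatively compact. Then (A,B) has property UC. -/
open Filter Topology

variable {X : Type*} [NormedAddCommGroup X] [NormedSpace ℝ X]

/-!
Pass to a subsequence along which `xₙ ⇀ a₁`, `yₙ ⇀ a₂` and `zₙ ⇀ b` weakly. By weak lower
semicontinuity of the norm, `a₁ - b`, `a₂ - b` and `midpoint a₁ a₂ - b` all have norm `d(A,B)`,
so strict convexity forces `a₁ = a₂`. The Kadec-Klee property then upgrades `xₙ - zₙ ⇀ a₁ - b`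
and `yₙ - zₙ ⇀ a₁ - b` to norm convergence, hence `‖xₙ - yₙ‖ → 0` along the subsequence; since
the original sequences can be replaced by arbitrary subsequences, the whole sequence converges.
-/

section Distance

omit [NormedSpace ℝ X]

variable {A B : Set X}

lemma setD_le_norm_sub {x y : X} (hx : x ∈ A) (hy : y ∈ B) : setD A B ≤ ‖x - y‖ :=
  csInf_le ⟨0, by rintro r ⟨x, -, y, -, rfl⟩; exact norm_nonneg _⟩ ⟨x, hx, y, hy, rfl⟩

lemma setD_comm (A B : Set X) : setD B A = setD A B := by
  unfold setD
  congr 1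
  ext r
  constructor <;> rintro ⟨x, hx, y, hy, rfl⟩ <;> exact ⟨y, hy, x, hx, norm_sub_rev _ _⟩

lemma ptD_le_norm_sub {z y : X} (hy : y ∈ B) : ptD z B ≤ ‖z - y‖ :=
  csInf_le ⟨0, by rintro r ⟨y, -, rfl⟩; exact norm_nonneg _⟩ ⟨y, hy, rfl⟩

lemma setD_le_ptD {z : X} (hz : z ∈ A) (hB : B.Nonempty) : setD A B ≤ ptD z B := by
  obtain ⟨y, hy⟩ := hB
  refine le_csInf ⟨‖z - y‖, y, hy, rfl⟩ ?_
  rintro r ⟨y', hy', rfl⟩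
  exact setD_le_norm_sub hz hy'

lemma tendsto_ptD_of_tendsto_norm_sub {u v : ℕ → X} (hu : ∀ n, u n ∈ A) (hv : ∀ n, v n ∈ B)
    (h : Tendsto (fun n => ‖u n - v n‖) atTop (𝓝 (setD A B))) :
    Tendsto (fun n => ptD (u n) B) atTop (𝓝 (setD A B)) :=
  tendsto_of_tendsto_of_tendsto_of_le_of_le tendsto_const_nhds h
    (fun n => setD_le_ptD (hu n) ⟨v 0, hv 0⟩) (fun n => ptD_le_norm_sub (hv n))

end Distance

namespace WeakConv

variable {u v : ℕ → X} {a b : X}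

lemma sub (hu : WeakConv u a) (hv : WeakConv v b) : WeakConv (u - v) (a - b) := fun f => by
  simpa only [Pi.sub_apply, map_sub] using (hu f).sub (hv f)

lemma midpoint (hu : WeakConv u a) (hv : WeakConv v b) :
    WeakConv (fun n => midpoint ℝ (u n) (v n)) (midpoint ℝ a b) := fun f => by
  simp only [midpoint_eq_smul_add, map_smul, map_add, smul_eq_mul]
  exact ((hu f).add (hv f)).const_mul _

lemma comp (hu : WeakConv u a) {φ : ℕ → ℕ} (hφ : Tendsto φ atTop atTop) :
    WeakConv (u ∘ φ) a :=
  fun f => (hu f).comp hφ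

lemma norm_le_of_tendsto (hu : WeakConv u a) {L : ℝ}
    (hL : Tendsto (fun n => ‖u n‖) atTop (𝓝 L)) : ‖a‖ ≤ L := by
  rcases eq_or_ne a 0 with rfl | ha
  · simpa using ge_of_tendsto' hL fun n => norm_nonneg _
  obtain ⟨f, hf, hfa⟩ := exists_dual_vector ℝ a (norm_ne_zero_iff.mpr ha)
  have hfu : Tendsto (fun n => f (u n)) atTop (𝓝 ‖a‖) := by simpa [hfa] using hu f
  refine le_of_tendsto_of_tendsto' hfu hL fun n => ?_
  calc f (u n) ≤ ‖f‖ * ‖u n‖ := (le_abs_self _).trans (f.le_opNorm _)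
    _ = ‖u n‖ := by rw [hf, one_mul]

end WeakConv

section Minimizing

variable {A B : Set X} {u v : ℕ → X} {a b : X}

lemma tendsto_norm_midpoint_sub (hA : Convex ℝ A) {x y z : ℕ → X} (hx : ∀ n, x n ∈ A)
    (hy : ∀ n, y n ∈ A) (hz : ∀ n, z n ∈ B)
    (hxz : Tendsto (fun n => ‖x n - z n‖) atTop (𝓝 (setD A B)))
    (hyz : Tendsto (fun n => ‖y n - z n‖) atTop (𝓝 (setD A B))) :
    Tendsto (fun n => ‖midpoint ℝ (x n) (y n) - z n‖) atTop (𝓝 (setD A B)) := by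
  have hmean : Tendsto (fun n => (‖x n - z n‖ + ‖y n - z n‖) / 2) atTop
      (𝓝 ((setD A B + setD A B) / 2)) := (hxz.add hyz).div_const 2
  rw [add_self_div_two] at hmean
  refine tendsto_of_tendsto_of_tendsto_of_le_of_le tendsto_const_nhds hmean
    (fun n => setD_le_norm_sub (hA.midpoint_mem (hx n) (hy n)) (hz n)) fun n => ?_
  simpa only [midpoint_self, dist_eq_norm] using
    dist_midpoint_midpoint_le (x n) (y n) (z n) (z n)

lemma norm_sub_eq_setD_of_weakConv (ha : a ∈ A) (hb : b ∈ B) (huv : WeakConv (u - v) (a - b))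
    (hd : Tendsto (fun n => ‖u n - v n‖) atTop (𝓝 (setD A B))) : ‖a - b‖ = setD A B :=
  le_antisymm (huv.norm_le_of_tendsto hd) (setD_le_norm_sub ha hb)

lemma tendsto_sub_of_weakConv (hKK : KadecKleeProp X) (ha : a ∈ A) (hb : b ∈ B)
    (huv : WeakConv (u - v) (a - b))
    (hd : Tendsto (fun n => ‖u n - v n‖) atTop (𝓝 (setD A B))) :
    Tendsto (u - v) atTop (𝓝 (a - b)) :=
  hKK _ _ huv (by rwa [norm_sub_eq_setD_of_weakConv ha hb huv hd])

end Minimizing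

lemma eq_of_norm_sub_eq_of_norm_midpoint_sub_eq [StrictConvexSpace ℝ X] {a₁ a₂ b : X}
    (h : ‖a₁ - b‖ = ‖a₂ - b‖) (hm : ‖midpoint ℝ a₁ a₂ - b‖ = ‖a₁ - b‖) : a₁ = a₂ := by
  by_contra hne
  have hlt := (norm_midpoint_lt_iff h).2 (sub_left_injective.ne hne)
  have hmid : (1 / 2 : ℝ) • (a₁ - b + (a₂ - b)) = midpoint ℝ a₁ a₂ - b := by
    rw [midpoint_eq_smul_add, invOf_eq_inv]
    module
  rw [hmid, hm] at hlt
  exact hlt.false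

section UC

variable {A B : Set X} (hA : Convex ℝ A) {x y z : ℕ → X} (hx : ∀ n, x n ∈ A)
  (hy : ∀ n, y n ∈ A) (hz : ∀ n, z n ∈ B)
  (hxz : Tendsto (fun n => ‖x n - z n‖) atTop (𝓝 (setD A B)))
  (hyz : Tendsto (fun n => ‖y n - z n‖) atTop (𝓝 (setD A B)))
include hA hx hy hz hxz hyz

lemma tendsto_norm_sub_zero_of_weakConv [StrictConvexSpace ℝ X] (hKK : KadecKleeProp X)
    {a₁ a₂ b : X} (ha₁ : a₁ ∈ A) (ha₂ : a₂ ∈ A) (hb : b ∈ B)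
    (hxa : WeakConv x a₁) (hya : WeakConv y a₂) (hzb : WeakConv z b) :
    Tendsto (fun n => ‖x n - y n‖) atTop (𝓝 0) := by
  have e₁ := norm_sub_eq_setD_of_weakConv ha₁ hb (hxa.sub hzb) hxz
  have e₂ := norm_sub_eq_setD_of_weakConv ha₂ hb (hya.sub hzb) hyz
  have em := norm_sub_eq_setD_of_weakConv (hA.midpoint_mem ha₁ ha₂) hb
    ((hxa.midpoint hya).sub hzb) (tendsto_norm_midpoint_sub hA hx hy hz hxz hyz)
  obtain rfl : a₁ = a₂ := eq_of_norm_sub_eq_of_norm_midpoint_sub_eq (e₁.trans e₂.symm)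
    (em.trans e₁.symm)
  have hx' := tendsto_sub_of_weakConv hKK ha₁ hb (hxa.sub hzb) hxz
  have hy' := tendsto_sub_of_weakConv hKK ha₁ hb (hya.sub hzb) hyz
  simpa using (hx'.sub hy').norm

lemma exists_subseq_tendsto_norm_sub_zero [StrictConvexSpace ℝ X] (hKK : KadecKleeProp X)
    (hwacA : WeakApproxCompactWrt A B) (hwacB : WeakApproxCompactWrt B A) :
    ∃ φ : ℕ → ℕ, StrictMono φ ∧ Tendsto (fun n => ‖x (φ n) - y (φ n)‖) atTop (𝓝 0) := by
  have hzx : Tendsto (fun n => ptD (z n) A) atTop (𝓝 (setD B A)) := by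
    refine tendsto_ptD_of_tendsto_norm_sub hz hx ?_
    rw [setD_comm]
    exact hxz.congr fun n => norm_sub_rev _ _
  obtain ⟨a₁, ha₁, φ₁, hφ₁, hxa⟩ := hwacA x hx (tendsto_ptD_of_tendsto_norm_sub hx hz hxz)
  obtain ⟨a₂, ha₂, φ₂, hφ₂, hya⟩ := hwacA (y ∘ φ₁) (fun n => hy _)
    ((tendsto_ptD_of_tendsto_norm_sub hy hz hyz).comp hφ₁.tendsto_atTop)
  obtain ⟨b, hb, φ₃, hφ₃, hzb⟩ := hwacB (z ∘ φ₁ ∘ φ₂) (fun n => hz _)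
    (hzx.comp (hφ₁.comp hφ₂).tendsto_atTop)
  have hφ : StrictMono (φ₁ ∘ φ₂ ∘ φ₃) := hφ₁.comp (hφ₂.comp hφ₃)
  exact ⟨_, hφ, tendsto_norm_sub_zero_of_weakConv hA (fun n => hx _) (fun n => hy _)
    (fun n => hz _) (hxz.comp hφ.tendsto_atTop) (hyz.comp hφ.tendsto_atTop) hKK ha₁ ha₂ hb
    (hxa.comp (hφ₂.comp hφ₃).tendsto_atTop) (hya.comp hφ₃.tendsto_atTop) hzb⟩

end UC

theorem stmt6_general [StrictConvexSpace ℝ X]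
    (hKK : KadecKleeProp X)
    (A B : Set X)
    (hAcv : Convex ℝ A)
    (hwacA : WeakApproxCompactWrt A B) (hwacB : WeakApproxCompactWrt B A) :
    PropertyUC A B := by
  intro x y z hx hy hz hxz hyz
  refine tendsto_of_subseq_tendsto fun ns hns => ?_
  obtain ⟨φ, -, hφ⟩ := exists_subseq_tendsto_norm_sub_zero hAcv (fun n => hx (ns n))
    (fun n => hy (ns n)) (fun n => hz (ns n)) (hxz.comp hns) (hyz.comp hns) hKK hwacA hwacB
  exact ⟨φ, hφ⟩

theorem stmt6 [CompleteSpace X] [StrictConvexSpace ℝ X]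
    (hKK : KadecKleeProp X)
    (A B : Set X) (hAne : A.Nonempty) (hBne : B.Nonempty)
    (hAcl : IsClosed A) (hBcl : IsClosed B)
    (hAbd : Bornology.IsBounded A) (hBbd : Bornology.IsBounded B)
    (hAcv : Convex ℝ A) (hBcv : Convex ℝ B)
    (hwacA : WeakApproxCompactWrt A B) (hwacB : WeakApproxCompactWrt B A) :
    PropertyUC A B :=
  stmt6_general hKK A B hAcv hwacA hwacB
end

section
/- Let X be a real Banach space with the Kadec-Klee property, and suppose that every weak approximatively compact pair (A,B) of nonempty closed bounded convex subsets of X has property UC. Then X is strictly convex. -/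
open Filter Topology

variable {X : Type*} [NormedAddCommGroup X] [NormedSpace ℝ X]

lemma segment_norm_one {X : Type*} [NormedAddCommGroup X] [NormedSpace ℝ X]
    {x y : X} (hx : ‖x‖ = 1) (hy : ‖y‖ = 1) (hxy : ‖x + y‖ = 2) :
    ∀ a ∈ segment ℝ x y, ‖a‖ = 1 := by
  rintro a ⟨t, s, ht, hs, hts, rfl⟩
  have hle : ‖t • x + s • y‖ ≤ 1 := by
    calc ‖t • x + s • y‖ ≤ ‖t • x‖ + ‖s • y‖ := norm_add_le _ _
    _ = t * ‖x‖ + s * ‖y‖ := by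
        rw [norm_smul, norm_smul, Real.norm_of_nonneg ht, Real.norm_of_nonneg hs]
    _ = 1 := by rw [hx, hy]; linarith
  have hle2 : ‖s • x + t • y‖ ≤ 1 := by
    calc ‖s • x + t • y‖ ≤ ‖s • x‖ + ‖t • y‖ := norm_add_le _ _
    _ = s * ‖x‖ + t * ‖y‖ := by
        rw [norm_smul, norm_smul, Real.norm_of_nonneg hs, Real.norm_of_nonneg ht]
    _ = 1 := by rw [hx, hy]; linarith
  have key : (2:ℝ) ≤ ‖t • x + s • y‖ + ‖s • x + t • y‖ := by
    have : (t • x + s • y) + (s • x + t • y) = x + y := by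
      have hx' : t • x + s • x = x := by
        rw [← add_smul, hts, one_smul]
      have hy' : s • y + t • y = y := by
        rw [← add_smul]
        rw [add_comm] at hts
        rw [hts, one_smul]
      calc (t • x + s • y) + (s • x + t • y)
          = (t • x + s • x) + (s • y + t • y) := by abel
        _ = x + y := by rw [hx', hy']
    calc (2:ℝ) = ‖(t • x + s • y) + (s • x + t • y)‖ := by rw [this, hxy]
    _ ≤ _ := norm_add_le _ _
  linarith

theorem stmt7 [CompleteSpace X] (hKK : KadecKleeProp X)
    (h : ∀ A B : Set X, A.Nonempty → B.Nonempty → IsClosed A → IsClosed B →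
      Bornology.IsBounded A → Bornology.IsBounded B → Convex ℝ A → Convex ℝ B →
      WeakApproxCompactWrt A B → WeakApproxCompactWrt B A → PropertyUC A B) :
    StrictConvexSpace ℝ X := by
  apply StrictConvexSpace.of_norm_add_ne_two
  intro x y hx hy hne hadd
  set A : Set X := segment ℝ x y with hA
  set B : Set X := ({0} : Set X) with hB
  have hnorm1 : ∀ a ∈ A, ‖a‖ = 1 := segment_norm_one hx hy hadd
  have hAcomp : IsCompact A := by
    rw [hA, segment_eq_image]
    exact (isCompact_Icc).image (by fun_prop)
  have hxA : x ∈ A := left_mem_segment ℝ x y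
  have hyA : y ∈ A := right_mem_segment ℝ x y
  -- d(A,B) = 1
  have hset : {r : ℝ | ∃ a ∈ A, ∃ b ∈ B, r = ‖a - b‖} = {1} := by
    ext r
    simp only [Set.mem_setOf_eq, Set.mem_singleton_iff]
    constructor
    · rintro ⟨a, ha, b, hb, rfl⟩
      rw [hB] at hb
      simp only [Set.mem_singleton_iff] at hb
      rw [hb, sub_zero]
      exact hnorm1 a ha
    · rintro rfl
      exact ⟨x, hxA, 0, rfl, by rw [sub_zero, hx]⟩
  have hd : setD A B = 1 := by rw [setD, hset, csInf_singleton]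
  have hUC : PropertyUC A B := by
    apply h A B ⟨x, hxA⟩ ⟨0, rfl⟩ hAcomp.isClosed isClosed_singleton
      hAcomp.isBounded Bornology.isBounded_singleton (convex_segment x y)
      (convex_singleton 0)
    · intro u hu _
      obtain ⟨a, ha, φ, hφ, hconv⟩ := hAcomp.tendsto_subseq hu
      exact ⟨a, ha, φ, hφ, fun f => (f.continuous.tendsto a).comp hconv⟩
    · intro u hu _
      refine ⟨0, rfl, id, strictMono_id, fun f => ?_⟩
      have : ∀ n, f ((u ∘ id) n) = f 0 := fun n => by
        simp only [Function.comp, id]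
        rw [hu n]
      simp only [this]
      exact tendsto_const_nhds
  have := hUC (fun _ => x) (fun _ => y) (fun _ => 0) (fun _ => hxA) (fun _ => hyA)
    (fun _ => rfl)
    (by simpa [hd, sub_zero, hx] using (tendsto_const_nhds : Tendsto (fun _ : ℕ => (1:ℝ)) atTop (𝓝 1)))
    (by simpa [hd, sub_zero, hy] using (tendsto_const_nhds : Tendsto (fun _ : ℕ => (1:ℝ)) atTop (𝓝 1)))
  have h0 : ‖x - y‖ = 0 := tendsto_nhds_unique tendsto_const_nhds this
  exact hne (sub_eq_zero.mp (norm_eq_zero.mp h0))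
end

section
/- If a pair (A,B) of nonempty subsets of a normed space has property UC, then (A,B) is semisharp proximal. -/
open Filter Topology

variable {X : Type*} [NormedAddCommGroup X] [NormedSpace ℝ X]

theorem stmt8 (A B : Set X) (hAne : A.Nonempty) (hBne : B.Nonempty)
    (hUC : PropertyUC A B) (hUC' : PropertyUC B A) :
    SemisharpProximal A B := by
  have hsymm : setD B A = setD A B := by
    unfold setD
    congr 1
    ext r
    constructor
    · rintro ⟨x, hx, y, hy, rfl⟩
      exact ⟨y, hy, x, hx, (norm_sub_rev _ _)⟩
    · rintro ⟨x, hx, y, hy, rfl⟩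
      exact ⟨y, hy, x, hx, (norm_sub_rev _ _)⟩
  constructor
  · intro x hx y hy z hz h1 h2
    have := hUC' (fun _ => y) (fun _ => z) (fun _ => x) (fun _ => hy) (fun _ => hz)
      (fun _ => hx)
      (by simp only [norm_sub_rev y x, h1, hsymm]; exact tendsto_const_nhds)
      (by simp only [norm_sub_rev z x, h2, hsymm]; exact tendsto_const_nhds)
    have h0 : ‖y - z‖ = 0 := tendsto_nhds_unique tendsto_const_nhds this
    rwa [norm_sub_eq_zero_iff] at h0
  · intro y hy x hx z hz h1 h2
    have := hUC (fun _ => x) (fun _ => z) (fun _ => y) (fun _ => hx) (fun _ => hz)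
      (fun _ => hy)
      (by simp only [h1]; exact tendsto_const_nhds)
      (by simp only [h2]; exact tendsto_const_nhds)
    have h0 : ‖x - z‖ = 0 := tendsto_nhds_unique tendsto_const_nhds this
    rwa [norm_sub_eq_zero_iff] at h0
end

section
/- Let X be a real Banach space having proximal uniform normal structure, i.e., there exists c<1 such that N(A,B)≤c for every pair (A,B) of nonempty closed bounded convex subsets of X that is proximal with at least one of A,B containing more than one point. Then X is strictly convex. -/
open Filter Topology

variable {X : Type*} [NormedAddCommGroup X] [NormedSpace ℝ X]

theorem stmt9 [CompleteSpace X]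
    (h : ∃ c : ℝ, c < 1 ∧ ∀ A B : Set X, A.Nonempty → B.Nonempty →
      IsClosed A → IsClosed B → Bornology.IsBounded A → Bornology.IsBounded B →
      Convex ℝ A → Convex ℝ B → ProximalPair A B →
      (¬ A.Subsingleton ∨ ¬ B.Subsingleton) → NN A B ≤ c) :
    StrictConvexSpace ℝ X := by
  obtain ⟨c, hc, hN⟩ := h
  refine StrictConvexSpace.of_norm_add_ne_two fun x y hx hy hne h2 => ?_
  -- every point of the segment has norm 1
  have hseg : ∀ z ∈ segment ℝ x y, ‖z‖ = 1 := by
    rintro z ⟨a, b, ha, hb, hab, rfl⟩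
    have hle : ‖a • x + b • y‖ ≤ 1 := by
      calc ‖a • x + b • y‖ ≤ ‖a • x‖ + ‖b • y‖ := norm_add_le _ _
        _ = a + b := by
          rw [norm_smul, norm_smul, hx, hy, Real.norm_of_nonneg ha, Real.norm_of_nonneg hb]
          ring
        _ = 1 := hab
    have hge : 1 ≤ ‖a • x + b • y‖ := by
      have key : (a • x + b • y) + (b • x + a • y) = x + y := by
        have : (a + b) • x + (a + b) • y = x + y := by rw [hab, one_smul, one_smul]
        rw [← this, add_smul, add_smul]; abel
      have h1 : ‖b • x + a • y‖ ≤ 1 := by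
        calc ‖b • x + a • y‖ ≤ ‖b • x‖ + ‖a • y‖ := norm_add_le _ _
          _ = b + a := by
            rw [norm_smul, norm_smul, hx, hy, Real.norm_of_nonneg ha, Real.norm_of_nonneg hb]
            ring
          _ = 1 := by rw [add_comm]; exact hab
      have := norm_add_le (a • x + b • y) (b • x + a • y)
      rw [key, h2] at this
      linarith
    linarith
  set A : Set X := segment ℝ x y with hA
  set B : Set X := ({0} : Set X) with hB
  have hxA : x ∈ A := left_mem_segment ℝ x y
  have hyA : y ∈ A := right_mem_segment ℝ x y
  have hAne : A.Nonempty := ⟨x, hxA⟩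
  -- the key distance computation for nonempty H1 ⊆ A, H2 = {0}
  have hdset : ∀ H1 : Set X, H1 ⊆ A → H1.Nonempty →
      {r : ℝ | ∃ a ∈ H1, ∃ b ∈ B, r = ‖a - b‖} = {1} := by
    intro H1 hsub ⟨a0, ha0⟩
    ext r
    simp only [Set.mem_setOf_eq, Set.mem_singleton_iff]
    constructor
    · rintro ⟨a, ha, b, hb, rfl⟩
      rw [Set.mem_singleton_iff] at hb
      subst hb
      rw [sub_zero]
      exact hseg a (hsub ha)
    · rintro rfl
      exact ⟨a0, ha0, 0, rfl, by rw [sub_zero, hseg a0 (hsub ha0)]⟩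
  have hsetD : ∀ H1 : Set X, H1 ⊆ A → H1.Nonempty → setD H1 B = 1 := by
    intro H1 hsub hne1
    rw [setD, hdset H1 hsub hne1, csInf_singleton]
  have hsetDelta : ∀ H1 : Set X, H1 ⊆ A → H1.Nonempty → setDelta H1 B = 1 := by
    intro H1 hsub hne1
    rw [setDelta, hdset H1 hsub hne1, csSup_singleton]
  have hptDeltaB : ∀ a ∈ A, ptDelta a B = 1 := by
    intro a ha
    have : {r : ℝ | ∃ y ∈ B, r = ‖a - y‖} = {1} := by
      ext r
      simp only [Set.mem_setOf_eq, Set.mem_singleton_iff, hB]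
      constructor
      · rintro ⟨b, hb, rfl⟩
        subst hb
        rw [sub_zero]; exact hseg a ha
      · rintro rfl
        exact ⟨0, rfl, by rw [sub_zero, hseg a ha]⟩
    rw [ptDelta, this, csSup_singleton]
  have hptDelta0 : ∀ H1 : Set X, H1 ⊆ A → H1.Nonempty → ptDelta (0 : X) H1 = 1 := by
    intro H1 hsub ⟨a0, ha0⟩
    have : {r : ℝ | ∃ y ∈ H1, r = ‖(0 : X) - y‖} = {1} := by
      ext r
      simp only [Set.mem_setOf_eq, Set.mem_singleton_iff]
      constructor
      · rintro ⟨b, hb, rfl⟩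
        rw [zero_sub, norm_neg]; exact hseg b (hsub hb)
      · rintro rfl
        exact ⟨a0, ha0, by rw [zero_sub, norm_neg, hseg a0 (hsub ha0)]⟩
    rw [ptDelta, this, csSup_singleton]
  have hrr1 : ∀ H1 : Set X, H1 ⊆ A → H1.Nonempty → rr H1 B = 1 := by
    intro H1 hsub ⟨a0, ha0⟩
    have : {t : ℝ | ∃ x ∈ H1, t = ptDelta x B} = {1} := by
      ext t
      simp only [Set.mem_setOf_eq, Set.mem_singleton_iff]
      constructor
      · rintro ⟨a, ha, rfl⟩; exact hptDeltaB a (hsub ha)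
      · rintro rfl; exact ⟨a0, ha0, (hptDeltaB a0 (hsub ha0)).symm⟩
    rw [rr, this, csInf_singleton]
  have hrr2 : ∀ H1 : Set X, H1 ⊆ A → H1.Nonempty → rr B H1 = 1 := by
    intro H1 hsub hne1
    have : {t : ℝ | ∃ x ∈ B, t = ptDelta x H1} = {1} := by
      ext t
      simp only [Set.mem_setOf_eq, Set.mem_singleton_iff, hB]
      constructor
      · rintro ⟨b, hb, rfl⟩
        subst hb
        exact hptDelta0 H1 hsub hne1
      · rintro rfl
        exact ⟨0, rfl, (hptDelta0 H1 hsub hne1).symm⟩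
    rw [rr, this, csInf_singleton]
  -- A is compact, closed, bounded, convex
  have hAcomp : IsCompact A := by
    rw [hA, segment_eq_image ℝ x y]
    exact isCompact_Icc.image (by continuity)
  have hAclosed : IsClosed A := hAcomp.isClosed
  have hAbdd : Bornology.IsBounded A := hAcomp.isBounded
  have hAconv : Convex ℝ A := convex_segment x y
  have hAnsub : ¬ A.Subsingleton := by
    intro hsub
    exact hne (hsub hxA hyA)
  have hdAB : setD A B = 1 := hsetD A le_rfl hAne
  -- (A, B) is a proximal pair
  have hprox : ProximalPair A B := by
    constructor
    · ext a
      simp only [proxA, Set.mem_setOf_eq]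
      constructor
      · intro ha
        exact ⟨ha, 0, rfl, by rw [sub_zero, hseg a ha, hdAB]⟩
      · rintro ⟨ha, _⟩; exact ha
    · ext b
      simp only [proxB, Set.mem_setOf_eq, hB, Set.mem_singleton_iff]
      constructor
      · rintro rfl
        exact ⟨rfl, x, hxA, by rw [sub_zero, hx, hdAB]⟩
      · rintro ⟨hb, _⟩; exact hb
  -- the Upsilon set of ratios is exactly {1}
  have hSset : {t : ℝ | ∃ H1 H2 : Set X, Upsilon A B H1 H2 ∧ t = RR H1 H2 / setDelta H1 H2}
      = {1} := by
    ext t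
    simp only [Set.mem_setOf_eq, Set.mem_singleton_iff]
    constructor
    · rintro ⟨H1, H2, ⟨hs1, hs2, hn1, hn2, _, _, _, _, _, _, _, _, _⟩, rfl⟩
      have hH2 : H2 = B := by
        rcases Set.subset_singleton_iff_eq.mp hs2 with h' | h'
        · exact absurd h' hn2.ne_empty
        · exact h'
      subst hH2
      rw [RR, hrr1 H1 hs1 hn1, hrr2 H1 hs1 hn1, hsetDelta H1 hs1 hn1, max_self, div_one]
    · rintro rfl
      refine ⟨A, B, ⟨le_rfl, le_rfl, hAne, ⟨0, rfl⟩, hAclosed, isClosed_singleton,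
        hAbdd, Bornology.isBounded_singleton, hAconv, convex_singleton 0, hprox,
        Or.inl hAnsub, rfl⟩, ?_⟩
      rw [RR, hrr1 A le_rfl hAne, hrr2 A le_rfl hAne, hsetDelta A le_rfl hAne, max_self,
        div_one]
  have hNN : NN A B = 1 := by rw [NN, hSset, csSup_singleton]
  have := hN A B hAne ⟨0, rfl⟩ hAclosed isClosed_singleton hAbdd
    Bornology.isBounded_singleton hAconv (convex_singleton 0) hprox (Or.inl hAnsub)
  rw [hNN] at this
  linarith
end

section
/- Let X be a real Banach space and let (A,B) be a nonempty closed bounded convex proximal pair in X having proximal uniform normal structure, i.e., N(A,B)<1. Then there exists c∈(0,1) such that for every (H_1,K_1)∈Υ(A,B) there exist z_1∈H_1 and z_2∈K_1 with ‖z_1−z_2‖=d(H_1,K_1) and max{δ(z_1,K_1), δ(z_2,H_1)} ≤ c·δ(H_1,K_1). -/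
open Filter Topology

variable {X : Type*} [NormedAddCommGroup X] [NormedSpace ℝ X]

section Aux

variable {H K : Set X}

lemma aux_cross_bddAbove (hH : Bornology.IsBounded H) (hK : Bornology.IsBounded K) :
    BddAbove {r : ℝ | ∃ x ∈ H, ∃ y ∈ K, r = ‖x - y‖} := by
  obtain ⟨M1, hM1⟩ := (isBounded_iff_forall_norm_le).1 hH
  obtain ⟨M2, hM2⟩ := (isBounded_iff_forall_norm_le).1 hK
  refine ⟨M1 + M2, ?_⟩
  rintro r ⟨x, hx, y, hy, rfl⟩
  calc ‖x - y‖ ≤ ‖x‖ + ‖y‖ := norm_sub_le _ _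
    _ ≤ M1 + M2 := add_le_add (hM1 x hx) (hM2 y hy)

lemma aux_pt_bddAbove (z : X) (hK : Bornology.IsBounded K) :
    BddAbove {r : ℝ | ∃ y ∈ K, r = ‖z - y‖} := by
  obtain ⟨M2, hM2⟩ := (isBounded_iff_forall_norm_le).1 hK
  refine ⟨‖z‖ + M2, ?_⟩
  rintro r ⟨y, hy, rfl⟩
  calc ‖z - y‖ ≤ ‖z‖ + ‖y‖ := norm_sub_le _ _
    _ ≤ ‖z‖ + M2 := by linarith [hM2 y hy]

lemma aux_le_setDelta (hH : Bornology.IsBounded H) (hK : Bornology.IsBounded K)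
    {x y : X} (hx : x ∈ H) (hy : y ∈ K) : ‖x - y‖ ≤ setDelta H K :=
  le_csSup (aux_cross_bddAbove hH hK) ⟨x, hx, y, hy, rfl⟩

lemma aux_setD_le {x y : X} (hx : x ∈ H) (hy : y ∈ K) : setD H K ≤ ‖x - y‖ := by
  refine csInf_le ⟨0, ?_⟩ ⟨x, hx, y, hy, rfl⟩
  rintro r ⟨a, _, b, _, rfl⟩
  exact norm_nonneg _

lemma aux_ptDelta_le {z t : X → Prop} : True := trivial

lemma aux_ptDelta_le_of (hKne : K.Nonempty) {z : X} {t : ℝ}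
    (h : ∀ y ∈ K, ‖z - y‖ ≤ t) : ptDelta z K ≤ t := by
  obtain ⟨y0, hy0⟩ := hKne
  refine csSup_le ⟨‖z - y0‖, y0, hy0, rfl⟩ ?_
  rintro r ⟨y, hy, rfl⟩
  exact h y hy

lemma aux_le_ptDelta (hK : Bornology.IsBounded K) {z y : X} (hy : y ∈ K) :
    ‖z - y‖ ≤ ptDelta z K :=
  le_csSup (aux_pt_bddAbove z hK) ⟨y, hy, rfl⟩

lemma aux_ptDelta_nonneg (hK : Bornology.IsBounded K) (hKne : K.Nonempty) (z : X) :
    0 ≤ ptDelta z K := by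
  obtain ⟨y, hy⟩ := hKne
  exact le_trans (norm_nonneg _) (aux_le_ptDelta hK hy)

lemma aux_rr_le (hK : Bornology.IsBounded K) (hKne : K.Nonempty) {x : X} (hx : x ∈ H) :
    rr H K ≤ ptDelta x K := by
  refine csInf_le ⟨0, ?_⟩ ⟨x, hx, rfl⟩
  rintro r ⟨a, _, rfl⟩
  exact aux_ptDelta_nonneg hK hKne a

lemma aux_exists_lt_of_rr_lt (hHne : H.Nonempty) {t : ℝ} (h : rr H K < t) :
    ∃ x ∈ H, ptDelta x K < t := by
  obtain ⟨x0, hx0⟩ := hHne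
  have hne : {t : ℝ | ∃ x ∈ H, t = ptDelta x K}.Nonempty := ⟨ptDelta x0 K, x0, hx0, rfl⟩
  obtain ⟨r, ⟨x, hx, rfl⟩, hrt⟩ := exists_lt_of_csInf_lt hne h
  exact ⟨x, hx, hrt⟩

lemma aux_setDelta_pos (hH : Bornology.IsBounded H) (hK : Bornology.IsBounded K)
    (hHne : H.Nonempty) (hKne : K.Nonempty)
    (hns : ¬ H.Subsingleton ∨ ¬ K.Subsingleton) : 0 < setDelta H K := by
  have key : ∀ (a b : X), a ∈ H → b ∈ H → a ≠ b → 0 < setDelta H K := by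
    intro a b ha hb hab
    obtain ⟨y, hy⟩ := hKne
    have h1 := aux_le_setDelta hH hK ha hy
    have h2 := aux_le_setDelta hH hK hb hy
    have h3 : 0 < ‖a - b‖ := by
      rw [norm_pos_iff]; exact sub_ne_zero_of_ne hab
    have h4 : ‖a - b‖ ≤ ‖a - y‖ + ‖b - y‖ := by
      calc ‖a - b‖ = ‖(a - y) - (b - y)‖ := by
            rw [show (a - y) - (b - y) = a - b by abel]
        _ ≤ ‖a - y‖ + ‖b - y‖ := norm_sub_le _ _
    linarith
  rcases hns with h | h
  · rw [Set.not_subsingleton_iff] at h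
    obtain ⟨a, ha, b, hb, hab⟩ := h
    exact key a b ha hb hab
  · rw [Set.not_subsingleton_iff] at h
    obtain ⟨a, ha, b, hb, hab⟩ := h
    obtain ⟨x, hx⟩ := hHne
    have h1 := aux_le_setDelta hH hK hx ha
    have h2 := aux_le_setDelta hH hK hx hb
    have h3 : 0 < ‖a - b‖ := by
      rw [norm_pos_iff]; exact sub_ne_zero_of_ne hab
    have h4 : ‖a - b‖ ≤ ‖x - a‖ + ‖x - b‖ := by
      calc ‖a - b‖ = ‖(x - b) - (x - a)‖ := by
            rw [show (x - b) - (x - a) = a - b by abel]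
        _ ≤ ‖x - b‖ + ‖x - a‖ := norm_sub_le _ _
        _ = ‖x - a‖ + ‖x - b‖ := by ring
    linarith

/-- For an Upsilon pair, `RR ≤ setDelta`. -/
lemma aux_RR_le_setDelta (hH : Bornology.IsBounded H) (hK : Bornology.IsBounded K)
    (hHne : H.Nonempty) (hKne : K.Nonempty) : RR H K ≤ setDelta H K := by
  obtain ⟨x0, hx0⟩ := hHne
  obtain ⟨y0, hy0⟩ := hKne
  have h1 : rr H K ≤ setDelta H K := by
    refine le_trans (aux_rr_le hK ⟨y0, hy0⟩ hx0) ?_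
    exact aux_ptDelta_le_of ⟨y0, hy0⟩ fun y hy => aux_le_setDelta hH hK hx0 hy
  have h2 : rr K H ≤ setDelta H K := by
    refine le_trans (aux_rr_le hH ⟨x0, hx0⟩ hy0) ?_
    refine aux_ptDelta_le_of ⟨x0, hx0⟩ fun x hx => ?_
    rw [norm_sub_rev]
    exact aux_le_setDelta hH hK hx hy0
  exact max_le h1 h2

lemma aux_norm_half (a b v : X) :
    ‖((1:ℝ)/2) • a + ((1:ℝ)/2) • b - v‖ ≤ (‖a - v‖ + ‖b - v‖) / 2 := by
  have h : ((1:ℝ)/2) • a + ((1:ℝ)/2) • b - v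
      = ((1:ℝ)/2) • (a - v) + ((1:ℝ)/2) • (b - v) := by module
  rw [h]
  calc ‖((1:ℝ)/2) • (a - v) + ((1:ℝ)/2) • (b - v)‖
      ≤ ‖((1:ℝ)/2) • (a - v)‖ + ‖((1:ℝ)/2) • (b - v)‖ := norm_add_le _ _
    _ = (‖a - v‖ + ‖b - v‖) / 2 := by
        rw [norm_smul, norm_smul]; simp [Real.norm_eq_abs]; ring

lemma aux_norm_half_sub (a b a' b' : X) :
    ‖(((1:ℝ)/2) • a + ((1:ℝ)/2) • b) - (((1:ℝ)/2) • a' + ((1:ℝ)/2) • b')‖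
      ≤ (‖a - a'‖ + ‖b - b'‖) / 2 := by
  have h : (((1:ℝ)/2) • a + ((1:ℝ)/2) • b) - (((1:ℝ)/2) • a' + ((1:ℝ)/2) • b')
      = ((1:ℝ)/2) • (a - a') + ((1:ℝ)/2) • (b - b') := by module
  rw [h]
  calc ‖((1:ℝ)/2) • (a - a') + ((1:ℝ)/2) • (b - b')‖
      ≤ ‖((1:ℝ)/2) • (a - a')‖ + ‖((1:ℝ)/2) • (b - b')‖ := norm_add_le _ _
    _ = (‖a - a'‖ + ‖b - b'‖) / 2 := by
        rw [norm_smul, norm_smul]; simp [Real.norm_eq_abs]; ring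

end Aux

theorem stmt12 [CompleteSpace X]
    (A B : Set X) (hAne : A.Nonempty) (hBne : B.Nonempty)
    (hAcl : IsClosed A) (hBcl : IsClosed B)
    (hAbd : Bornology.IsBounded A) (hBbd : Bornology.IsBounded B)
    (hAcv : Convex ℝ A) (hBcv : Convex ℝ B) (hprox : ProximalPair A B)
    (hN : NN A B < 1) :
    ∃ c : ℝ, 0 < c ∧ c < 1 ∧ ∀ H1 K1 : Set X, Upsilon A B H1 K1 →
      ∃ z1 ∈ H1, ∃ z2 ∈ K1, ‖z1 - z2‖ = setD H1 K1 ∧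
        max (ptDelta z1 K1) (ptDelta z2 H1) ≤ c * setDelta H1 K1 := by
  classical
  set n : ℝ := max (NN A B) 0 with hn
  have hn0 : 0 ≤ n := le_max_right _ _
  have hn1 : n < 1 := max_lt hN one_pos
  set c : ℝ := (n + 1) / 2 with hc
  have hc0 : 0 < c := by positivity
  have hc1 : c < 1 := by rw [hc]; linarith
  have hnc : n < c := by rw [hc]; linarith
  set C : ℝ := (c + 1) / 2 with hC
  have hC0 : 0 < C := by positivity
  have hC1 : C < 1 := by rw [hC]; linarith
  refine ⟨C, hC0, hC1, ?_⟩
  intro H1 K1 hU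
  obtain ⟨hH1A, hK1B, hH1ne, hK1ne, hH1cl, hK1cl, hH1bd, hK1bd, hH1cv, hK1cv,
    hprox', hns, hdeq⟩ := hU
  set δ := setDelta H1 K1 with hδ
  set d := setD H1 K1 with hd
  have hδpos : 0 < δ := aux_setDelta_pos hH1bd hK1bd hH1ne hK1ne hns
  -- The NN-set is bounded above by 1
  have hbdd : ∀ t ∈ {t : ℝ | ∃ G1 G2 : Set X,
      Upsilon A B G1 G2 ∧ t = RR G1 G2 / setDelta G1 G2}, t ≤ 1 := by
    rintro t ⟨G1, G2, hG, rfl⟩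
    obtain ⟨_, _, hG1ne, hG2ne, _, _, hG1bd, hG2bd, _, _, _, hGns, _⟩ := hG
    have hpos := aux_setDelta_pos hG1bd hG2bd hG1ne hG2ne hGns
    rw [div_le_one hpos]
    exact aux_RR_le_setDelta hG1bd hG2bd hG1ne hG2ne
  have hmem : RR H1 K1 / δ ∈ {t : ℝ | ∃ G1 G2 : Set X,
      Upsilon A B G1 G2 ∧ t = RR G1 G2 / setDelta G1 G2} :=
    ⟨H1, K1, ⟨hH1A, hK1B, hH1ne, hK1ne, hH1cl, hK1cl, hH1bd, hK1bd, hH1cv, hK1cv,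
      hprox', hns, hdeq⟩, rfl⟩
  have hRRle : RR H1 K1 / δ ≤ NN A B := le_csSup ⟨1, fun t ht => hbdd t ht⟩ hmem
  have hRR : RR H1 K1 < c * δ := by
    have h1 : RR H1 K1 ≤ n * δ := by
      have : RR H1 K1 / δ ≤ n := le_trans hRRle (le_max_left _ _)
      calc RR H1 K1 = (RR H1 K1 / δ) * δ := by field_simp
        _ ≤ n * δ := mul_le_mul_of_nonneg_right this hδpos.le
    have h2 : n * δ < c * δ := by
      exact mul_lt_mul_of_pos_right hnc hδpos
    linarith
  have hrr1 : rr H1 K1 < c * δ := lt_of_le_of_lt (le_max_left _ _) hRR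
  have hrr2 : rr K1 H1 < c * δ := lt_of_le_of_lt (le_max_right _ _) hRR
  obtain ⟨x, hx, hxlt⟩ := aux_exists_lt_of_rr_lt hH1ne hrr1
  obtain ⟨y, hy, hylt⟩ := aux_exists_lt_of_rr_lt hK1ne hrr2
  -- proximal partners
  have hxp : x ∈ proxA H1 K1 := by rw [← hprox'.1]; exact hx
  have hyp : y ∈ proxB H1 K1 := by rw [← hprox'.2]; exact hy
  obtain ⟨-, x', hx', hxx'⟩ := hxp
  obtain ⟨-, y', hy', hyy'⟩ := hyp
  set z1 : X := ((1:ℝ)/2) • x + ((1:ℝ)/2) • y' with hz1def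
  set z2 : X := ((1:ℝ)/2) • x' + ((1:ℝ)/2) • y with hz2def
  have hz1 : z1 ∈ H1 := hH1cv hx hy' (by norm_num) (by norm_num) (by norm_num)
  have hz2 : z2 ∈ K1 := hK1cv hx' hy (by norm_num) (by norm_num) (by norm_num)
  refine ⟨z1, hz1, z2, hz2, ?_, ?_⟩
  · -- ‖z1 - z2‖ = d
    refine le_antisymm ?_ (aux_setD_le hz1 hz2)
    calc ‖z1 - z2‖ ≤ (‖x - x'‖ + ‖y' - y‖) / 2 := aux_norm_half_sub x y' x' y
      _ = d := by rw [hxx', hyy']; ring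
  · -- the max bound
    have hb1 : ptDelta z1 K1 ≤ C * δ := by
      refine aux_ptDelta_le_of hK1ne fun v hv => ?_
      have h1 : ‖x - v‖ ≤ ptDelta x K1 := aux_le_ptDelta hK1bd hv
      have h2 : ‖y' - v‖ ≤ δ := aux_le_setDelta hH1bd hK1bd hy' hv
      have h3 := aux_norm_half x y' v
      have : ‖z1 - v‖ ≤ (c * δ + δ) / 2 := by
        refine le_trans h3 ?_
        have : ‖x - v‖ ≤ c * δ := by linarith
        linarith
      calc ‖z1 - v‖ ≤ (c * δ + δ) / 2 := this
        _ = C * δ := by rw [hC]; ring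
    have hb2 : ptDelta z2 H1 ≤ C * δ := by
      refine aux_ptDelta_le_of hH1ne fun u hu => ?_
      have h1 : ‖x' - u‖ ≤ δ := by
        rw [norm_sub_rev]; exact aux_le_setDelta hH1bd hK1bd hu hx'
      have h2 : ‖y - u‖ ≤ ptDelta y H1 := aux_le_ptDelta hH1bd hu
      have h3 := aux_norm_half x' y u
      have : ‖z2 - u‖ ≤ (δ + c * δ) / 2 := by
        refine le_trans h3 ?_
        have : ‖y - u‖ ≤ c * δ := by linarith
        linarith
      calc ‖z2 - u‖ ≤ (δ + c * δ) / 2 := this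
        _ = C * δ := by rw [hC]; ring
    exact max_le hb1 hb2
end

section
/- Let X be a real Banach space and let (A,B) be a pair of nonempty closed bounded convex subsets of X. If c_0 = sup{R(C_1,C_2)/δ(C_1,C_2) : (C_1,C_2)∈Ῡ(A,B)} < 1, then A_0 ≠ ∅ and B_0 ≠ ∅. -/
open Filter Topology

variable {X : Type*} [NormedAddCommGroup X] [NormedSpace ℝ X]

set_option linter.unusedSectionVars false

section Aux

variable {X : Type*} [NormedAddCommGroup X] [NormedSpace ℝ X]

private lemma bddAbove_pairSet {C1 C2 : Set X} (h1 : Bornology.IsBounded C1)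
    (h2 : Bornology.IsBounded C2) :
    BddAbove {r : ℝ | ∃ x ∈ C1, ∃ y ∈ C2, r = ‖x - y‖} := by
  obtain ⟨R1, hR1⟩ := isBounded_iff_forall_norm_le.mp h1
  obtain ⟨R2, hR2⟩ := isBounded_iff_forall_norm_le.mp h2
  refine ⟨R1 + R2, ?_⟩
  rintro r ⟨x, hx, y, hy, rfl⟩
  calc ‖x - y‖ ≤ ‖x‖ + ‖y‖ := norm_sub_le _ _
    _ ≤ R1 + R2 := add_le_add (hR1 x hx) (hR2 y hy)

private lemma bddBelow_pairSet (C1 C2 : Set X) :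
    BddBelow {r : ℝ | ∃ x ∈ C1, ∃ y ∈ C2, r = ‖x - y‖} := by
  refine ⟨0, ?_⟩
  rintro r ⟨x, hx, y, hy, rfl⟩
  exact norm_nonneg _

private lemma setD_le_norm {C1 C2 : Set X} {x y : X} (hx : x ∈ C1) (hy : y ∈ C2) :
    setD C1 C2 ≤ ‖x - y‖ :=
  csInf_le (bddBelow_pairSet C1 C2) ⟨x, hx, y, hy, rfl⟩

private lemma setD_nonneg (C1 C2 : Set X) : 0 ≤ setD C1 C2 := by
  apply Real.sInf_nonneg
  rintro r ⟨x, hx, y, hy, rfl⟩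
  exact norm_nonneg _

private lemma norm_le_setDelta {C1 C2 : Set X} (h1 : Bornology.IsBounded C1)
    (h2 : Bornology.IsBounded C2) {x y : X} (hx : x ∈ C1) (hy : y ∈ C2) :
    ‖x - y‖ ≤ setDelta C1 C2 :=
  le_csSup (bddAbove_pairSet h1 h2) ⟨x, hx, y, hy, rfl⟩

private lemma setDelta_le {C1 C2 : Set X} {M : ℝ} (h1 : C1.Nonempty) (h2 : C2.Nonempty)
    (h : ∀ x ∈ C1, ∀ y ∈ C2, ‖x - y‖ ≤ M) : setDelta C1 C2 ≤ M := by
  obtain ⟨x0, hx0⟩ := h1; obtain ⟨y0, hy0⟩ := h2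
  have hne : Set.Nonempty {r : ℝ | ∃ x ∈ C1, ∃ y ∈ C2, r = ‖x - y‖} :=
    ⟨‖x0 - y0‖, x0, hx0, y0, hy0, rfl⟩
  apply csSup_le hne
  rintro r ⟨x, hx, y, hy, rfl⟩
  exact h x hx y hy

private lemma setD_anti {C1 C2 C1' C2' : Set X} (hs1 : C1' ⊆ C1) (hs2 : C2' ⊆ C2)
    (h1 : C1'.Nonempty) (h2 : C2'.Nonempty) : setD C1 C2 ≤ setD C1' C2' := by
  obtain ⟨x0, hx0⟩ := h1; obtain ⟨y0, hy0⟩ := h2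
  have hne : Set.Nonempty {r : ℝ | ∃ x ∈ C1', ∃ y ∈ C2', r = ‖x - y‖} :=
    ⟨‖x0 - y0‖, x0, hx0, y0, hy0, rfl⟩
  apply csInf_le_csInf (bddBelow_pairSet C1 C2) hne
  rintro r ⟨x, hx, y, hy, rfl⟩
  exact ⟨x, hs1 hx, y, hs2 hy, rfl⟩

private lemma setDelta_mono {C1 C2 C1' C2' : Set X} (hs1 : C1' ⊆ C1) (hs2 : C2' ⊆ C2)
    (h1 : C1'.Nonempty) (h2 : C2'.Nonempty) (hb1 : Bornology.IsBounded C1)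
    (hb2 : Bornology.IsBounded C2) : setDelta C1' C2' ≤ setDelta C1 C2 := by
  obtain ⟨x0, hx0⟩ := h1; obtain ⟨y0, hy0⟩ := h2
  have hne : Set.Nonempty {r : ℝ | ∃ x ∈ C1', ∃ y ∈ C2', r = ‖x - y‖} :=
    ⟨‖x0 - y0‖, x0, hx0, y0, hy0, rfl⟩
  apply csSup_le_csSup (bddAbove_pairSet hb1 hb2) hne
  rintro r ⟨x, hx, y, hy, rfl⟩
  exact ⟨x, hs1 hx, y, hs2 hy, rfl⟩

private lemma ptD_le_norm {C : Set X} {z y : X} (hy : y ∈ C) : ptD z C ≤ ‖z - y‖ :=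
  csInf_le ⟨0, by rintro r ⟨y', _, rfl⟩; exact norm_nonneg _⟩ ⟨y, hy, rfl⟩

private lemma exists_ptD_lt {C : Set X} (hC : C.Nonempty) {z : X} {M : ℝ}
    (h : ptD z C < M) : ∃ y ∈ C, ‖z - y‖ < M := by
  obtain ⟨y0, hy0⟩ := hC
  have hne : Set.Nonempty {r : ℝ | ∃ y ∈ C, r = ‖z - y‖} := ⟨‖z - y0‖, y0, hy0, rfl⟩
  obtain ⟨r, ⟨y, hy, rfl⟩, hr⟩ := exists_lt_of_csInf_lt hne h
  exact ⟨y, hy, hr⟩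

private lemma ptD_le_add {C : Set X} (hC : C.Nonempty) (u v : X) :
    ptD u C ≤ ptD v C + ‖u - v‖ := by
  obtain ⟨y0, hy0⟩ := hC
  have h : ptD u C - ‖u - v‖ ≤ ptD v C := by
    have hne : Set.Nonempty {r : ℝ | ∃ y ∈ C, r = ‖v - y‖} := ⟨‖v - y0‖, y0, hy0, rfl⟩
    apply le_csInf hne
    rintro r ⟨y, hy, rfl⟩
    have h1 : ptD u C ≤ ‖u - y‖ := ptD_le_norm hy
    have h2 : ‖u - y‖ ≤ ‖u - v‖ + ‖v - y‖ := by
      calc ‖u - y‖ = ‖(u - v) + (v - y)‖ := by abel_nf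
        _ ≤ ‖u - v‖ + ‖v - y‖ := norm_add_le _ _
    linarith
  linarith

private lemma isClosed_core {C1 C2 : Set X} (hcl : IsClosed C1) (hC2 : C2.Nonempty)
    (r : ℝ) : IsClosed {u | u ∈ C1 ∧ ptD u C2 ≤ r} := by
  apply isClosed_of_closure_subset
  intro u hu
  have huC1 : u ∈ C1 := hcl.closure_subset (closure_mono (fun v hv => hv.1) hu)
  refine ⟨huC1, le_of_forall_pos_le_add ?_⟩
  intro ε hε
  obtain ⟨v, hv, hd⟩ := Metric.mem_closure_iff.mp hu ε hε
  calc ptD u C2 ≤ ptD v C2 + ‖u - v‖ := ptD_le_add hC2 u v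
    _ ≤ r + ε := add_le_add hv.2 (by rw [← dist_eq_norm]; exact hd.le)

private lemma convex_core {C1 C2 : Set X} (hcv1 : Convex ℝ C1) (hcv2 : Convex ℝ C2)
    (hC2 : C2.Nonempty) (r : ℝ) : Convex ℝ {u | u ∈ C1 ∧ ptD u C2 ≤ r} := by
  rintro x ⟨hx1, hx2⟩ y ⟨hy1, hy2⟩ a b ha hb hab
  refine ⟨hcv1 hx1 hy1 ha hb hab, le_of_forall_pos_le_add ?_⟩
  intro ε hε
  obtain ⟨p, hp, hxp⟩ := exists_ptD_lt hC2 (lt_of_le_of_lt hx2 (lt_add_of_pos_right _ hε))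
  obtain ⟨q, hq, hyq⟩ := exists_ptD_lt hC2 (lt_of_le_of_lt hy2 (lt_add_of_pos_right _ hε))
  have hz : a • p + b • q ∈ C2 := hcv2 hp hq ha hb hab
  have key : ptD (a • x + b • y) C2 ≤ ‖(a • x + b • y) - (a • p + b • q)‖ :=
    ptD_le_norm hz
  have heq : (a • x + b • y) - (a • p + b • q) = a • (x - p) + b • (y - q) := by
    module
  rw [heq] at key
  have hn : ‖a • (x - p) + b • (y - q)‖ ≤ a * ‖x - p‖ + b * ‖y - q‖ := by
    calc ‖a • (x - p) + b • (y - q)‖ ≤ ‖a • (x - p)‖ + ‖b • (y - q)‖ := norm_add_le _ _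
      _ = a * ‖x - p‖ + b * ‖y - q‖ := by
          rw [norm_smul, norm_smul, Real.norm_eq_abs, Real.norm_eq_abs,
            abs_of_nonneg ha, abs_of_nonneg hb]
  have : a * ‖x - p‖ + b * ‖y - q‖ ≤ r + ε := by
    have h1 := mul_le_mul_of_nonneg_left hxp.le ha
    have h2 := mul_le_mul_of_nonneg_left hyq.le hb
    have h3 : a * (r + ε) + b * (r + ε) = r + ε := by rw [← add_mul, hab, one_mul]
    linarith
  linarith

private lemma ptDelta_nonneg (z : X) (C : Set X) : 0 ≤ ptDelta z C := by
  apply Real.sSup_nonneg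
  rintro r ⟨y, hy, rfl⟩
  exact norm_nonneg _

private lemma norm_le_ptDelta {C : Set X} (hC : Bornology.IsBounded C) {z y : X}
    (hy : y ∈ C) : ‖z - y‖ ≤ ptDelta z C := by
  obtain ⟨R, hR⟩ := isBounded_iff_forall_norm_le.mp hC
  have hbdd : BddAbove {r : ℝ | ∃ y' ∈ C, r = ‖z - y'‖} := by
    refine ⟨‖z‖ + R, ?_⟩
    rintro r ⟨y', hy', rfl⟩
    calc ‖z - y'‖ ≤ ‖z‖ + ‖y'‖ := norm_sub_le _ _
      _ ≤ ‖z‖ + R := by linarith [hR y' hy']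
  exact le_csSup hbdd ⟨y, hy, rfl⟩

private lemma setDelta_pos {H1 H2 : Set X} (h1 : H1.Nonempty) (h2 : H2.Nonempty)
    (hb1 : Bornology.IsBounded H1) (hb2 : Bornology.IsBounded H2)
    (hns : ¬ H1.Subsingleton ∨ ¬ H2.Subsingleton) : 0 < setDelta H1 H2 := by
  rcases hns with hns | hns
  · rw [Set.not_subsingleton_iff] at hns
    obtain ⟨a, ha, a', ha', hne⟩ := hns
    obtain ⟨b, hb⟩ := h2
    have h1' : ‖a - b‖ ≤ setDelta H1 H2 := norm_le_setDelta hb1 hb2 ha hb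
    have h2' : ‖a' - b‖ ≤ setDelta H1 H2 := norm_le_setDelta hb1 hb2 ha' hb
    have h3 : ‖a - a'‖ ≤ ‖a - b‖ + ‖a' - b‖ := by
      calc ‖a - a'‖ = ‖(a - b) - (a' - b)‖ := by abel_nf
        _ ≤ ‖a - b‖ + ‖a' - b‖ := norm_sub_le _ _
    have h4 : 0 < ‖a - a'‖ := by
      rw [norm_pos_iff, sub_ne_zero]; exact hne
    linarith
  · rw [Set.not_subsingleton_iff] at hns
    obtain ⟨b, hb, b', hb', hne⟩ := hns
    obtain ⟨a, ha⟩ := h1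
    have h1' : ‖a - b‖ ≤ setDelta H1 H2 := norm_le_setDelta hb1 hb2 ha hb
    have h2' : ‖a - b'‖ ≤ setDelta H1 H2 := norm_le_setDelta hb1 hb2 ha hb'
    have h3 : ‖b - b'‖ ≤ ‖a - b‖ + ‖a - b'‖ := by
      have : ‖b - b'‖ = ‖(a - b') - (a - b)‖ := by abel_nf
      rw [this]
      have := norm_sub_le (a - b') (a - b)
      linarith
    have h4 : 0 < ‖b - b'‖ := by
      rw [norm_pos_iff, sub_ne_zero]; exact hne
    linarith

private lemma RR_le_setDelta {H1 H2 : Set X} (h1 : H1.Nonempty) (h2 : H2.Nonempty)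
    (hb1 : Bornology.IsBounded H1) (hb2 : Bornology.IsBounded H2) :
    RR H1 H2 ≤ setDelta H1 H2 := by
  obtain ⟨x0, hx0⟩ := h1; obtain ⟨y0, hy0⟩ := h2
  have hbdd1 : BddBelow {t : ℝ | ∃ x ∈ H1, t = ptDelta x H2} :=
    ⟨0, by rintro t ⟨x, hx, rfl⟩; exact ptDelta_nonneg _ _⟩
  have hbdd2 : BddBelow {t : ℝ | ∃ y ∈ H2, t = ptDelta y H1} :=
    ⟨0, by rintro t ⟨y, hy, rfl⟩; exact ptDelta_nonneg _ _⟩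
  have hr1 : rr H1 H2 ≤ setDelta H1 H2 := by
    have : rr H1 H2 ≤ ptDelta x0 H2 := csInf_le hbdd1 ⟨x0, hx0, rfl⟩
    refine this.trans ?_
    have hne : Set.Nonempty {r : ℝ | ∃ y ∈ H2, r = ‖x0 - y‖} := ⟨‖x0 - y0‖, y0, hy0, rfl⟩
    apply csSup_le hne
    rintro r ⟨y, hy, rfl⟩
    exact norm_le_setDelta hb1 hb2 hx0 hy
  have hr2 : rr H2 H1 ≤ setDelta H1 H2 := by
    have : rr H2 H1 ≤ ptDelta y0 H1 := csInf_le hbdd2 ⟨y0, hy0, rfl⟩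
    refine this.trans ?_
    have hne : Set.Nonempty {r : ℝ | ∃ x ∈ H1, r = ‖y0 - x‖} := ⟨‖y0 - x0‖, x0, hx0, rfl⟩
    apply csSup_le hne
    rintro r ⟨x, hx, rfl⟩
    rw [norm_sub_rev]
    exact norm_le_setDelta hb1 hb2 hx hy0
  exact max_le hr1 hr2

private lemma bddAbove_ratios (A B : Set X) :
    BddAbove {t : ℝ | ∃ C1 C2 : Set X, UpsilonBar A B C1 C2 ∧
      t = RR C1 C2 / setDelta C1 C2} := by
  refine ⟨1, ?_⟩
  rintro t ⟨H1, H2, hU, rfl⟩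
  obtain ⟨_, _, h1, h2, _, _, hb1, hb2, _, _, hns, _⟩ := hU
  have hpos := setDelta_pos h1 h2 hb1 hb2 hns
  rw [div_le_one hpos]
  exact RR_le_setDelta h1 h2 hb1 hb2

private lemma exists_special {A B H1 H2 : Set X} {c1 : ℝ} (hc01 : cZero A B < c1)
    (hU : UpsilonBar A B H1 H2) :
    (∃ x ∈ H1, ∀ z ∈ H2, ‖x - z‖ ≤ c1 * setDelta H1 H2) ∧
    (∃ y ∈ H2, ∀ z ∈ H1, ‖y - z‖ ≤ c1 * setDelta H1 H2) := by
  obtain ⟨_, _, h1, h2, _, _, hb1, hb2, _, _, hns, _⟩ := hU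
  have hpos := setDelta_pos h1 h2 hb1 hb2 hns
  have hratio : RR H1 H2 / setDelta H1 H2 ≤ cZero A B :=
    le_csSup (bddAbove_ratios A B) ⟨H1, H2,
      ⟨‹_›, ‹_›, h1, h2, ‹_›, ‹_›, hb1, hb2, ‹_›, ‹_›, hns, ‹_›⟩, rfl⟩
  have hRR : RR H1 H2 < c1 * setDelta H1 H2 := by
    have := lt_of_le_of_lt hratio hc01
    calc RR H1 H2 = RR H1 H2 / setDelta H1 H2 * setDelta H1 H2 := by
          field_simp
      _ < c1 * setDelta H1 H2 := by
          exact mul_lt_mul_of_pos_right this hpos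
  obtain ⟨x0, hx0⟩ := h1; obtain ⟨y0, hy0⟩ := h2
  constructor
  · have h : rr H1 H2 < c1 * setDelta H1 H2 := lt_of_le_of_lt (le_max_left _ _) hRR
    have hne : Set.Nonempty {t : ℝ | ∃ x ∈ H1, t = ptDelta x H2} := ⟨ptDelta x0 H2, x0, hx0, rfl⟩
    obtain ⟨s, ⟨x, hx, rfl⟩, hs⟩ := exists_lt_of_csInf_lt hne h
    refine ⟨x, hx, fun z hz => ?_⟩
    exact (norm_le_ptDelta hb2 hz).trans hs.le
  · have h : rr H2 H1 < c1 * setDelta H1 H2 := lt_of_le_of_lt (le_max_right _ _) hRR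
    have hne : Set.Nonempty {t : ℝ | ∃ y ∈ H2, t = ptDelta y H1} := ⟨ptDelta y0 H1, y0, hy0, rfl⟩
    obtain ⟨s, ⟨y, hy, rfl⟩, hs⟩ := exists_lt_of_csInf_lt hne h
    refine ⟨y, hy, fun z hz => ?_⟩
    exact (norm_le_ptDelta hb1 hz).trans hs.le

private lemma hull_cross {U V : Set X} {M : ℝ} (h : ∀ a ∈ U, ∀ b ∈ V, ‖a - b‖ ≤ M) :
    ∀ a ∈ closure (convexHull ℝ U), ∀ b ∈ closure (convexHull ℝ V), ‖a - b‖ ≤ M := by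
  have h1 : ∀ b ∈ V, closure (convexHull ℝ U) ⊆ Metric.closedBall b M := by
    intro b hb
    apply closure_minimal (convexHull_min ?_ (convex_closedBall _ _))
      Metric.isClosed_closedBall
    intro a ha
    rw [Metric.mem_closedBall, dist_eq_norm]
    exact h a ha b hb
  intro a ha b hb
  have h2 : V ⊆ Metric.closedBall a M := by
    intro v hv
    rw [Metric.mem_closedBall, dist_comm, ← Metric.mem_closedBall]
    exact h1 v hv ha
  have h3 : closure (convexHull ℝ V) ⊆ Metric.closedBall a M :=
    closure_minimal (convexHull_min h2 (convex_closedBall _ _)) Metric.isClosed_closedBall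
  have := h3 hb
  rw [Metric.mem_closedBall, dist_eq_norm] at this
  rw [norm_sub_rev]
  exact this

end Aux
section Shrink

variable {X : Type*} [NormedAddCommGroup X] [NormedSpace ℝ X]

set_option maxHeartbeats 1000000 in
private lemma shrink {A B C1 C2 : Set X} {c1 : ℝ} (hc01 : cZero A B < c1) (hc1 : 0 ≤ c1)
    (hno : ∀ x ∈ A, ∀ y ∈ B, ‖x - y‖ ≠ setD A B)
    (hC1A : C1 ⊆ A) (hC2B : C2 ⊆ B) (hne1 : C1.Nonempty) (hne2 : C2.Nonempty)
    (hcl1 : IsClosed C1) (hcl2 : IsClosed C2)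
    (hbd1 : Bornology.IsBounded C1) (hbd2 : Bornology.IsBounded C2)
    (hcv1 : Convex ℝ C1) (hcv2 : Convex ℝ C2)
    (hdist : setD C1 C2 = setD A B) :
    ∃ C1' C2' : Set X, C1' ⊆ C1 ∧ C2' ⊆ C2 ∧ C1'.Nonempty ∧ C2'.Nonempty ∧
      IsClosed C1' ∧ IsClosed C2' ∧ Bornology.IsBounded C1' ∧ Bornology.IsBounded C2' ∧
      Convex ℝ C1' ∧ Convex ℝ C2' ∧ setD C1' C2' = setD A B ∧
      setDelta C1' C2' ≤ (1 + c1) / 2 * setDelta C1 C2 := by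
  set d : ℝ := setD A B with hdDef
  set δ : ℝ := setDelta C1 C2 with hδDef
  set K1 : ℝ → Set X := fun η => {u | u ∈ C1 ∧ ptD u C2 ≤ d + η} with hK1def
  set K2 : ℝ → Set X := fun η => {u | u ∈ C2 ∧ ptD u C1 ≤ d + η} with hK2def
  have hK1sub : ∀ η, K1 η ⊆ C1 := fun η u hu => hu.1
  have hK2sub : ∀ η, K2 η ⊆ C2 := fun η u hu => hu.1
  have hK1mono : ∀ {η η' : ℝ}, η ≤ η' → K1 η ⊆ K1 η' := by
    intro η η' hη u hu
    exact ⟨hu.1, hu.2.trans (by linarith)⟩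
  have hK2mono : ∀ {η η' : ℝ}, η ≤ η' → K2 η ⊆ K2 η' := by
    intro η η' hη u hu
    exact ⟨hu.1, hu.2.trans (by linarith)⟩
  have pairmem : ∀ ε : ℝ, 0 < ε → ∃ v ∈ C1, ∃ w ∈ C2, ‖v - w‖ < d + ε := by
    intro ε hε
    have hlt : setD C1 C2 < d + ε := by rw [hdist]; linarith
    obtain ⟨x0, hx0⟩ := hne1; obtain ⟨y0, hy0⟩ := hne2
    have hne : Set.Nonempty {r : ℝ | ∃ x ∈ C1, ∃ y ∈ C2, r = ‖x - y‖} :=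
      ⟨‖x0 - y0‖, x0, hx0, y0, hy0, rfl⟩
    obtain ⟨r, ⟨v, hv, w, hw, rfl⟩, hr⟩ := exists_lt_of_csInf_lt hne hlt
    exact ⟨v, hv, w, hw, hr⟩
  have hK1ne : ∀ η : ℝ, 0 < η → (K1 η).Nonempty := by
    intro η hη
    obtain ⟨v, hv, w, hw, hvw⟩ := pairmem η hη
    exact ⟨v, hv, (ptD_le_norm hw).trans hvw.le⟩
  have hK2ne : ∀ η : ℝ, 0 < η → (K2 η).Nonempty := by
    intro η hη
    obtain ⟨v, hv, w, hw, hvw⟩ := pairmem η hη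
    refine ⟨w, hw, (ptD_le_norm hv).trans ?_⟩
    rw [norm_sub_rev]
    exact hvw.le
  have hKdist : ∀ η η' : ℝ, 0 < η → 0 < η' → setD (K1 η) (K2 η') = d := by
    intro η η' hη hη'
    refine le_antisymm ?_ ?_
    · apply le_of_forall_pos_le_add
      intro ε hε
      obtain ⟨v, hv, w, hw, hvw⟩ := pairmem (min ε (min η η')) (by positivity)
      have hεle : min ε (min η η') ≤ ε := min_le_left _ _
      have hηle : min ε (min η η') ≤ η := (min_le_right _ _).trans (min_le_left _ _)
      have hη'le : min ε (min η η') ≤ η' := (min_le_right _ _).trans (min_le_right _ _)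
      have hvK : v ∈ K1 η := ⟨hv, (ptD_le_norm hw).trans (by linarith)⟩
      have hwK : w ∈ K2 η' := by
        refine ⟨hw, (ptD_le_norm hv).trans ?_⟩
        rw [norm_sub_rev]
        linarith
      calc setD (K1 η) (K2 η') ≤ ‖v - w‖ := setD_le_norm hvK hwK
        _ ≤ d + ε := by linarith
    · rw [← hdist]
      exact setD_anti (hK1sub η) (hK2sub η') (hK1ne η hη) (hK2ne η' hη')
  have hKcl1 : ∀ η : ℝ, IsClosed (K1 η) := fun η => isClosed_core hcl1 hne2 _
  have hKcl2 : ∀ η : ℝ, IsClosed (K2 η) := fun η => isClosed_core hcl2 hne1 _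
  have hKcv1 : ∀ η : ℝ, Convex ℝ (K1 η) := fun η => convex_core hcv1 hcv2 hne2 _
  have hKcv2 : ∀ η : ℝ, Convex ℝ (K2 η) := fun η => convex_core hcv2 hcv1 hne1 _
  have hδ0 : 0 ≤ δ := by
    obtain ⟨x0, hx0⟩ := hne1; obtain ⟨y0, hy0⟩ := hne2
    exact (norm_nonneg (x0 - y0)).trans (norm_le_setDelta hbd1 hbd2 hx0 hy0)
  have noss : ∀ H1 H2 : Set X, H1 ⊆ C1 → H2 ⊆ C2 → H1.Nonempty → H2.Nonempty →
      setD H1 H2 = d → ¬ (H1.Subsingleton ∧ H2.Subsingleton) := by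
    rintro H1 H2 hs1 hs2 ⟨p, hp⟩ ⟨q, hq⟩ hdd ⟨hss1, hss2⟩
    have h1 : setD H1 H2 ≤ ‖p - q‖ := setD_le_norm hp hq
    have h2 : ‖p - q‖ ≤ setD H1 H2 := by
      have hne : Set.Nonempty {r : ℝ | ∃ x ∈ H1, ∃ y ∈ H2, r = ‖x - y‖} :=
        ⟨‖p - q‖, p, hp, q, hq, rfl⟩
      apply le_csInf hne
      rintro r ⟨p', hp', q', hq', rfl⟩
      rw [hss1 hp' hp, hss2 hq' hq]
    exact hno p (hC1A (hs1 hp)) q (hC2B (hs2 hq)) ((h1.antisymm h2).symm.trans hdd)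
  have main : ∀ k : ℕ, ∃ u yy : X,
      u ∈ K1 (3 * (1 / ((k : ℝ) + 1))) ∧ yy ∈ K2 (2 * (1 / ((k : ℝ) + 1))) ∧
      ‖u - yy‖ ≤ d + 3 * (1 / ((k : ℝ) + 1)) ∧
      (∀ z ∈ K2 (2 * (1 / ((k : ℝ) + 1))), ‖u - z‖ ≤ (1 + c1) / 2 * δ) ∧
      (∀ z ∈ K1 (3 * (1 / ((k : ℝ) + 1))), ‖yy - z‖ ≤ (1 + c1) / 2 * δ) := by
    intro k
    set t : ℝ := 1 / ((k : ℝ) + 1) with htdef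
    have ht0 : 0 < t := by positivity
    -- pair P = (K1 t, K2 2t)
    have hPdist : setD (K1 t) (K2 (2 * t)) = d := hKdist t (2 * t) ht0 (by linarith)
    have hP2 : (K2 (2 * t)).Nonempty := hK2ne _ (by linarith)
    have hUP : UpsilonBar A B (K1 t) (K2 (2 * t)) := by
      refine ⟨(hK1sub t).trans hC1A, (hK2sub _).trans hC2B, hK1ne t ht0, hP2,
        hKcl1 t, hKcl2 _, hbd1.subset (hK1sub t), hbd2.subset (hK2sub _),
        hKcv1 t, hKcv2 _, ?_, hPdist.trans hdDef⟩
      exact not_and_or.mp (noss _ _ (hK1sub t) (hK2sub _) (hK1ne t ht0) hP2 hPdist)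
    obtain ⟨⟨xb, hxbMem, hxbBound⟩, -⟩ := exists_special hc01 hUP
    have hdeltaP : setDelta (K1 t) (K2 (2 * t)) ≤ δ :=
      setDelta_mono (hK1sub t) (hK2sub _) (hK1ne t ht0) hP2 hbd1 hbd2
    have hxb2 : ∀ z ∈ K2 (2 * t), ‖xb - z‖ ≤ c1 * δ := by
      intro z hz
      exact (hxbBound z hz).trans (mul_le_mul_of_nonneg_left hdeltaP hc1)
    -- pair Q = (K1 3t, K2 2t)
    have hQ1 : (K1 (3 * t)).Nonempty := hK1ne _ (by linarith)
    have hQdist : setD (K1 (3 * t)) (K2 (2 * t)) = d := hKdist _ _ (by linarith) (by linarith)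
    have hUQ : UpsilonBar A B (K1 (3 * t)) (K2 (2 * t)) := by
      refine ⟨(hK1sub _).trans hC1A, (hK2sub _).trans hC2B, hQ1, hP2,
        hKcl1 _, hKcl2 _, hbd1.subset (hK1sub _), hbd2.subset (hK2sub _),
        hKcv1 _, hKcv2 _, ?_, hQdist.trans hdDef⟩
      exact not_and_or.mp (noss _ _ (hK1sub _) (hK2sub _) hQ1 hP2 hQdist)
    obtain ⟨-, ⟨yb, hybMem, hybBound⟩⟩ := exists_special hc01 hUQ
    have hdeltaQ : setDelta (K1 (3 * t)) (K2 (2 * t)) ≤ δ :=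
      setDelta_mono (hK1sub _) (hK2sub _) hQ1 hP2 hbd1 hbd2
    have hyb2 : ∀ z ∈ K1 (3 * t), ‖yb - z‖ ≤ c1 * δ := by
      intro z hz
      exact (hybBound z hz).trans (mul_le_mul_of_nonneg_left hdeltaQ hc1)
    -- partners
    have hxbC1 : xb ∈ C1 := hK1sub t hxbMem
    have hybC2 : yb ∈ C2 := hK2sub _ hybMem
    obtain ⟨y', hy'C2, hy'n⟩ := exists_ptD_lt hne2
      (lt_of_le_of_lt hxbMem.2 (by linarith : d + t < d + 2 * t))
    have hy'K : y' ∈ K2 (2 * t) := by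
      refine ⟨hy'C2, (ptD_le_norm hxbC1).trans ?_⟩
      rw [norm_sub_rev]
      exact hy'n.le
    obtain ⟨x', hx'C1, hx'n⟩ := exists_ptD_lt hne1
      (lt_of_le_of_lt hybMem.2 (by linarith : d + 2 * t < d + 3 * t))
    have hx'K : x' ∈ K1 (3 * t) := by
      refine ⟨hx'C1, (ptD_le_norm hybC2).trans ?_⟩
      rw [norm_sub_rev]
      exact hx'n.le
    -- midpoints
    have halfnorm : ∀ a b : X, ‖(1/2 : ℝ) • a + (1/2 : ℝ) • b‖ ≤ 1/2 * ‖a‖ + 1/2 * ‖b‖ := by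
      intro a b
      calc ‖(1/2 : ℝ) • a + (1/2 : ℝ) • b‖ ≤ ‖(1/2 : ℝ) • a‖ + ‖(1/2 : ℝ) • b‖ :=
            norm_add_le _ _
        _ = 1/2 * ‖a‖ + 1/2 * ‖b‖ := by
            rw [norm_smul, norm_smul, Real.norm_eq_abs,
              abs_of_nonneg (by norm_num : (0:ℝ) ≤ 1/2)]
    refine ⟨(1/2 : ℝ) • x' + (1/2 : ℝ) • xb, (1/2 : ℝ) • yb + (1/2 : ℝ) • y', ?_, ?_, ?_, ?_, ?_⟩
    · exact hKcv1 (3 * t) hx'K (hK1mono (by linarith) hxbMem) (by norm_num) (by norm_num)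
        (by norm_num)
    · exact hKcv2 (2 * t) hybMem hy'K (by norm_num) (by norm_num) (by norm_num)
    · have heq : ((1/2 : ℝ) • x' + (1/2 : ℝ) • xb) - ((1/2 : ℝ) • yb + (1/2 : ℝ) • y')
          = (1/2 : ℝ) • (x' - yb) + (1/2 : ℝ) • (xb - y') := by module
      rw [heq]
      have h1 : ‖x' - yb‖ ≤ d + 3 * t := by rw [norm_sub_rev]; exact hx'n.le
      have h2 : ‖xb - y'‖ ≤ d + 2 * t := hy'n.le
      calc ‖(1/2 : ℝ) • (x' - yb) + (1/2 : ℝ) • (xb - y')‖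
          ≤ 1/2 * ‖x' - yb‖ + 1/2 * ‖xb - y'‖ := halfnorm _ _
        _ ≤ d + 3 * t := by linarith
    · intro z hz
      have heq : ((1/2 : ℝ) • x' + (1/2 : ℝ) • xb) - z
          = (1/2 : ℝ) • (x' - z) + (1/2 : ℝ) • (xb - z) := by module
      rw [heq]
      have h1 : ‖x' - z‖ ≤ δ := norm_le_setDelta hbd1 hbd2 hx'C1 (hK2sub _ hz)
      have h2 : ‖xb - z‖ ≤ c1 * δ := hxb2 z hz
      calc ‖(1/2 : ℝ) • (x' - z) + (1/2 : ℝ) • (xb - z)‖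
          ≤ 1/2 * ‖x' - z‖ + 1/2 * ‖xb - z‖ := halfnorm _ _
        _ ≤ (1 + c1) / 2 * δ := by linarith
    · intro z hz
      have heq : ((1/2 : ℝ) • yb + (1/2 : ℝ) • y') - z
          = (1/2 : ℝ) • (yb - z) + (1/2 : ℝ) • (y' - z) := by module
      rw [heq]
      have h1 : ‖yb - z‖ ≤ c1 * δ := hyb2 z hz
      have h2 : ‖y' - z‖ ≤ δ := by
        rw [norm_sub_rev]
        exact norm_le_setDelta hbd1 hbd2 (hK1sub _ hz) hy'C2
      calc ‖(1/2 : ℝ) • (yb - z) + (1/2 : ℝ) • (y' - z)‖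
          ≤ 1/2 * ‖yb - z‖ + 1/2 * ‖y' - z‖ := halfnorm _ _
        _ ≤ (1 + c1) / 2 * δ := by linarith
  choose u yy huMem hyMem huy hucross hycross using main
  set C1' := closure (convexHull ℝ (Set.range u)) with hC1'def
  set C2' := closure (convexHull ℝ (Set.range yy)) with hC2'def
  have hrangeu : Set.range u ⊆ C1 := by rintro _ ⟨k, rfl⟩; exact hK1sub _ (huMem k)
  have hrangey : Set.range yy ⊆ C2 := by rintro _ ⟨k, rfl⟩; exact hK2sub _ (hyMem k)
  have hsub1 : C1' ⊆ C1 := closure_minimal (convexHull_min hrangeu hcv1) hcl1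
  have hsub2 : C2' ⊆ C2 := closure_minimal (convexHull_min hrangey hcv2) hcl2
  have humem' : ∀ k, u k ∈ C1' := fun k => subset_closure (subset_convexHull ℝ _ ⟨k, rfl⟩)
  have hymem' : ∀ k, yy k ∈ C2' := fun k => subset_closure (subset_convexHull ℝ _ ⟨k, rfl⟩)
  have hne1' : C1'.Nonempty := ⟨u 0, humem' 0⟩
  have hne2' : C2'.Nonempty := ⟨yy 0, hymem' 0⟩
  have hmono_t : ∀ {j k : ℕ}, j ≤ k → (1 : ℝ) / ((k : ℝ) + 1) ≤ 1 / ((j : ℝ) + 1) := by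
    intro j k hjk
    apply one_div_le_one_div_of_le (by positivity)
    have : (j : ℝ) ≤ (k : ℝ) := Nat.cast_le.mpr hjk
    linarith
  have hcrossall : ∀ a ∈ C1', ∀ b ∈ C2', ‖a - b‖ ≤ (1 + c1) / 2 * δ := by
    apply hull_cross
    rintro _ ⟨j, rfl⟩ _ ⟨k, rfl⟩
    rcases le_total j k with h | h
    · refine hucross j (yy k) (hK2mono ?_ (hyMem k))
      have := hmono_t h; linarith
    · rw [norm_sub_rev]
      refine hycross k (u j) (hK1mono ?_ (huMem j))
      have := hmono_t h; linarith
  have hdist' : setD C1' C2' = d := by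
    refine le_antisymm ?_ ?_
    · apply le_of_forall_pos_le_add
      intro ε hε
      obtain ⟨k, hk⟩ := exists_nat_gt (3 / ε)
      have hkpos : (0:ℝ) < (k : ℝ) + 1 := by positivity
      have h3 : (3:ℝ) < ε * ((k : ℝ) + 1) := by
        have h' := (div_lt_iff₀ hε).mp hk
        nlinarith
      have hk1 : 3 * ((1:ℝ) / ((k : ℝ) + 1)) < ε := by
        rw [mul_one_div, div_lt_iff₀ hkpos]
        linarith
      calc setD C1' C2' ≤ ‖u k - yy k‖ := setD_le_norm (humem' k) (hymem' k)
        _ ≤ d + 3 * (1 / ((k : ℝ) + 1)) := huy k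
        _ ≤ d + ε := by linarith
    · rw [← hdist]
      exact setD_anti hsub1 hsub2 hne1' hne2'
  exact ⟨C1', C2', hsub1, hsub2, hne1', hne2', isClosed_closure, isClosed_closure,
    hbd1.subset hsub1, hbd2.subset hsub2, (convex_convexHull ℝ _).closure,
    (convex_convexHull ℝ _).closure, hdist'.trans hdDef, setDelta_le hne1' hne2' hcrossall⟩

end Shrink
set_option maxHeartbeats 1000000 in
theorem stmt16 [CompleteSpace X]
    (A B : Set X) (hAne : A.Nonempty) (hBne : B.Nonempty)
    (hAcl : IsClosed A) (hBcl : IsClosed B)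
    (hAbd : Bornology.IsBounded A) (hBbd : Bornology.IsBounded B)
    (hAcv : Convex ℝ A) (hBcv : Convex ℝ B)
    (hc0 : cZero A B < 1) :
    (proxA A B).Nonempty ∧ (proxB A B).Nonempty := by
  suffices h : ∃ x ∈ A, ∃ y ∈ B, ‖x - y‖ = setD A B by
    obtain ⟨x, hx, y, hy, hxy⟩ := h
    exact ⟨⟨x, hx, y, hy, hxy⟩, ⟨y, hy, x, hx, hxy⟩⟩
  by_contra hno
  push_neg at hno
  set c1 : ℝ := (max (cZero A B) 0 + 1) / 2 with hc1def
  have hmaxlt : max (cZero A B) 0 < 1 := max_lt hc0 one_pos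
  have hmax0 : 0 ≤ max (cZero A B) 0 := le_max_right _ _
  have hc01 : cZero A B < c1 := by
    have h1 : cZero A B ≤ max (cZero A B) 0 := le_max_left _ _
    rw [hc1def]; linarith
  have hc1nonneg : 0 ≤ c1 := by rw [hc1def]; linarith
  have hc1lt : c1 < 1 := by rw [hc1def]; linarith
  set c2 : ℝ := (1 + c1) / 2 with hc2def
  have hc2nonneg : 0 ≤ c2 := by rw [hc2def]; linarith
  have hc2lt : c2 < 1 := by rw [hc2def]; linarith
  set Q : Set X × Set X → Prop := fun p => p.1 ⊆ A ∧ p.2 ⊆ B ∧ p.1.Nonempty ∧ p.2.Nonempty ∧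
    IsClosed p.1 ∧ IsClosed p.2 ∧ Bornology.IsBounded p.1 ∧ Bornology.IsBounded p.2 ∧
    Convex ℝ p.1 ∧ Convex ℝ p.2 ∧ setD p.1 p.2 = setD A B with hQdef
  have hstep : ∀ p : Set X × Set X, Q p → ∃ q : Set X × Set X, Q q ∧ q.1 ⊆ p.1 ∧ q.2 ⊆ p.2 ∧
      setDelta q.1 q.2 ≤ c2 * setDelta p.1 p.2 := by
    rintro ⟨C1, C2⟩ ⟨hA1, hB2, hne1, hne2, hcl1, hcl2, hbd1, hbd2, hcv1, hcv2, hd⟩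
    obtain ⟨C1', C2', hs1, hs2, hn1, hn2, hcl1', hcl2', hb1', hb2', hv1', hv2', hd', hδ'⟩ :=
      shrink hc01 hc1nonneg hno hA1 hB2 hne1 hne2 hcl1 hcl2 hbd1 hbd2 hcv1 hcv2 hd
    exact ⟨(C1', C2'), ⟨hs1.trans hA1, hs2.trans hB2, hn1, hn2, hcl1', hcl2', hb1', hb2',
      hv1', hv2', hd'⟩, hs1, hs2, hδ'⟩
  choose! f hfQ hf1 hf2 hf3 using hstep
  set F : ℕ → Set X × Set X := fun n => Nat.rec (A, B) (fun _ p => f p) n with hFdef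
  have hFQ : ∀ n, Q (F n) := by
    intro n
    induction n with
    | zero => exact ⟨subset_rfl, subset_rfl, hAne, hBne, hAcl, hBcl, hAbd, hBbd, hAcv, hBcv, rfl⟩
    | succ n ih => exact hfQ _ ih
  have hsubA : ∀ n, (F n).1 ⊆ A := fun n => (hFQ n).1
  have hsubB : ∀ n, (F n).2 ⊆ B := fun n => (hFQ n).2.1
  have hneF1 : ∀ n, (F n).1.Nonempty := fun n => (hFQ n).2.2.1
  have hneF2 : ∀ n, (F n).2.Nonempty := fun n => (hFQ n).2.2.2.1
  have hbdF1 : ∀ n, Bornology.IsBounded (F n).1 := fun n => (hFQ n).2.2.2.2.2.2.1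
  have hbdF2 : ∀ n, Bornology.IsBounded (F n).2 := fun n => (hFQ n).2.2.2.2.2.2.2.1
  have hnest1 : ∀ n, (F (n + 1)).1 ⊆ (F n).1 := fun n => hf1 (F n) (hFQ n)
  have hnest2 : ∀ n, (F (n + 1)).2 ⊆ (F n).2 := fun n => hf2 (F n) (hFQ n)
  have hδ0 : 0 ≤ setDelta A B := by
    obtain ⟨a, ha⟩ := hAne; obtain ⟨b, hb⟩ := hBne
    exact (norm_nonneg (a - b)).trans (norm_le_setDelta hAbd hBbd ha hb)
  have hgeo : ∀ n, setDelta (F n).1 (F n).2 ≤ c2 ^ n * setDelta A B := by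
    intro n
    induction n with
    | zero =>
      rw [pow_zero, one_mul]
      exact le_of_eq rfl
    | succ n ih =>
      calc setDelta (F (n + 1)).1 (F (n + 1)).2 ≤ c2 * setDelta (F n).1 (F n).2 :=
            hf3 (F n) (hFQ n)
        _ ≤ c2 * (c2 ^ n * setDelta A B) := mul_le_mul_of_nonneg_left ih hc2nonneg
        _ = c2 ^ (n + 1) * setDelta A B := by ring
  have hpt : ∀ n, ∃ p : X × X, p.1 ∈ (F n).1 ∧ p.2 ∈ (F n).2 := by
    intro n
    obtain ⟨a, ha⟩ := hneF1 n; obtain ⟨b, hb⟩ := hneF2 n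
    exact ⟨(a, b), ha, hb⟩
  choose g hg1 hg2 using hpt
  have htend : Filter.Tendsto (fun n : ℕ => c2 ^ n * setDelta A B) Filter.atTop (nhds 0) := by
    have h0 : Filter.Tendsto (fun n : ℕ => c2 ^ n) Filter.atTop (nhds 0) :=
      tendsto_pow_atTop_nhds_zero_of_lt_one hc2nonneg hc2lt
    simpa using h0.mul_const (setDelta A B)
  have hd_le : ∀ n, setD A B ≤ c2 ^ n * setDelta A B := by
    intro n
    calc setD A B ≤ ‖(g n).1 - (g n).2‖ := setD_le_norm (hsubA n (hg1 n)) (hsubB n (hg2 n))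
      _ ≤ setDelta (F n).1 (F n).2 := norm_le_setDelta (hbdF1 n) (hbdF2 n) (hg1 n) (hg2 n)
      _ ≤ c2 ^ n * setDelta A B := hgeo n
  have hd0 : setD A B = 0 := le_antisymm (ge_of_tendsto' htend hd_le) (setD_nonneg A B)
  have hcauchy : CauchySeq (fun n => (g n).1) := by
    apply cauchySeq_of_le_geometric c2 (2 * setDelta A B) hc2lt
    intro n
    rw [dist_eq_norm]
    have hx1 : (g (n + 1)).1 ∈ (F n).1 := hnest1 n (hg1 (n + 1))
    have h1 : ‖(g n).1 - (g n).2‖ ≤ c2 ^ n * setDelta A B :=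
      (norm_le_setDelta (hbdF1 n) (hbdF2 n) (hg1 n) (hg2 n)).trans (hgeo n)
    have h2 : ‖(g (n + 1)).1 - (g n).2‖ ≤ c2 ^ n * setDelta A B :=
      (norm_le_setDelta (hbdF1 n) (hbdF2 n) hx1 (hg2 n)).trans (hgeo n)
    have heq : (g n).1 - (g (n + 1)).1 = ((g n).1 - (g n).2) - ((g (n + 1)).1 - (g n).2) := by
      abel
    calc ‖(g n).1 - (g (n + 1)).1‖
        = ‖((g n).1 - (g n).2) - ((g (n + 1)).1 - (g n).2)‖ := by rw [heq]
      _ ≤ ‖(g n).1 - (g n).2‖ + ‖(g (n + 1)).1 - (g n).2‖ := norm_sub_le _ _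
      _ ≤ 2 * setDelta A B * c2 ^ n := by
          have : 2 * setDelta A B * c2 ^ n = c2 ^ n * setDelta A B + c2 ^ n * setDelta A B := by
            ring
          linarith
  obtain ⟨a, ha⟩ := cauchySeq_tendsto_of_complete hcauchy
  have haA : a ∈ A := hAcl.mem_of_tendsto ha
    (Filter.Eventually.of_forall fun n => hsubA n (hg1 n))
  have hy_tend : Filter.Tendsto (fun n => (g n).2) Filter.atTop (nhds a) := by
    rw [tendsto_iff_dist_tendsto_zero]
    have hb : ∀ n, dist ((g n).2) a ≤ c2 ^ n * setDelta A B + dist ((g n).1) a := by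
      intro n
      have h1 : dist ((g n).2) ((g n).1) ≤ c2 ^ n * setDelta A B := by
        rw [dist_eq_norm, norm_sub_rev]
        exact (norm_le_setDelta (hbdF1 n) (hbdF2 n) (hg1 n) (hg2 n)).trans (hgeo n)
      calc dist ((g n).2) a ≤ dist ((g n).2) ((g n).1) + dist ((g n).1) a :=
            dist_triangle _ _ _
        _ ≤ c2 ^ n * setDelta A B + dist ((g n).1) a := by linarith
    have hxa : Filter.Tendsto (fun n => dist ((g n).1) a) Filter.atTop (nhds 0) :=
      tendsto_iff_dist_tendsto_zero.mp ha
    apply squeeze_zero (fun n => dist_nonneg) hb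
    simpa using htend.add hxa
  have haB : a ∈ B := hBcl.mem_of_tendsto hy_tend
    (Filter.Eventually.of_forall fun n => hsubB n (hg2 n))
  exact hno a haA a haB (by rw [sub_self, norm_zero, hd0])
end
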